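/- arXiv:2210.07588 — 5 statements merged into one kernel-verified Lean document; each statement's English description precedes it below -/
import Mathlib

section
/- Lemma 1 of ASPIRE-EASE, Eq. (A.1) (descent of the asynchronous worker updates): Suppose Assumption 1 holds. Fix iteration t, iterates (w^s, z^s, h^s, λ^s, φ^s) for s ≤ t with all blocks in the respective constraint sets, step sizes η_w^t > 0, an integer τ ≥ 1, and a nonempty active set Q ⊆ {1,…,N}. Assume: (i) for each j ∈ Q there is a stale index t̃_j with t − τ ≤ t̃_j ≤ t such that w_j^t = w_j^{t̃_j} and φ_j^t = φ_j^{t̃_j}, and w_j^{t+1} is the metric projection onto W of w_j^t − η̲·∇_{w_j}L_p(w^{t̃_j}, z^{t̃_j}, h^{t̃_j}, λ^{t̃_j}, φ^{t̃_j}) for a fixed step 0 < η̲ ≤ η_w^t, while w_j^{t+1} = w_j^t for j ∉ Q; (ii) there are constants k₁ > 0 and ϑ > 0 such that for every j ∈ Q, ‖z^t − z^{t̃_j}‖² ≤ τk₁ϑ, ‖h^t − h^{t̃_j}‖² ≤ τk₁ϑ and Σ_{l=1}^m ‖λ_l^t − λ_l^{t̃_j}‖² ≤ τk₁ϑ, and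 ϑ ≤ ‖z^{t+1} − z^t‖² + ‖h^{t+1} − h^t‖² + Σ_{l=1}^m ‖λ_l^{t+1} − λ_l^t‖². Then L_p(w^{t+1}, z^t, h^t, λ^t, φ^t) − L_p(w^t, z^t, h^t, λ^t, φ^t) ≤ Σ_{j=1}^N ((L+1)/2 − 1/η_w^t)·‖w_j^{t+1} − w_j^t‖² + (3τk₁NL²/2)·(‖z^{t+1} − z^t‖² + ‖h^{t+1} − h^t‖² + Σ_{l=1}^m ‖λ_l^{t+1} − λ_l^t‖²). -/
open scoped RealInnerProductSpace

noncomputable section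

/-- `ℝ^p` with the Euclidean inner product. -/
abbrev Vec (p : ℕ) : Type := EuclideanSpace ℝ (Fin p)

/-- The augmented Lagrangian `L_p` of the ASPIRE-EASE problem. -/
def aLag {N m p : ℕ} (f : Fin N → Vec p → ℝ) (A : Fin m → Fin N → ℝ) (pbar κ : ℝ)
    (w : Fin N → Vec p) (z : Vec p) (h : ℝ) (lam : Fin m → ℝ) (phi : Fin N → Vec p) : ℝ :=
  h + (∑ l, lam l * ((∑ j, (pbar + A l j) * f j (w j)) - h))
    + (∑ j, ⟪phi j, z - w j⟫) + (∑ j, (κ / 2) * ‖z - w j‖ ^ 2)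

/-- A record of candidate blockwise partial gradients of `L_p`. -/
structure GradOracle (N m p : ℕ) where
  gw : (Fin N → Vec p) → Vec p → ℝ → (Fin m → ℝ) → (Fin N → Vec p) → Fin N → Vec p
  gz : (Fin N → Vec p) → Vec p → ℝ → (Fin m → ℝ) → (Fin N → Vec p) → Vec p
  gh : (Fin N → Vec p) → Vec p → ℝ → (Fin m → ℝ) → (Fin N → Vec p) → ℝ
  glam : (Fin N → Vec p) → Vec p → ℝ → (Fin m → ℝ) → (Fin N → Vec p) → Fin m → ℝ
  gphi : (Fin N → Vec p) → Vec p → ℝ → (Fin m → ℝ) → (Fin N → Vec p) → Fin N → Vec p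

/-- `G` records the genuine partial gradients `∇_{w_j}L_p, ∇_z L_p, ∇_h L_p, ∇_{λ_l}L_p,
`∇_{φ_j}L_p` of the augmented Lagrangian. -/
def IsGradOf {N m p : ℕ} (f : Fin N → Vec p → ℝ) (A : Fin m → Fin N → ℝ) (pbar κ : ℝ)
    (G : GradOracle N m p) : Prop :=
  (∀ (w : Fin N → Vec p) (z : Vec p) (h : ℝ) (lam : Fin m → ℝ) (phi : Fin N → Vec p) (j : Fin N),
    HasGradientAt (fun x => aLag f A pbar κ (Function.update w j x) z h lam phi)
      (G.gw w z h lam phi j) (w j)) ∧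
  (∀ (w : Fin N → Vec p) (z : Vec p) (h : ℝ) (lam : Fin m → ℝ) (phi : Fin N → Vec p),
    HasGradientAt (fun x => aLag f A pbar κ w x h lam phi) (G.gz w z h lam phi) z) ∧
  (∀ (w : Fin N → Vec p) (z : Vec p) (h : ℝ) (lam : Fin m → ℝ) (phi : Fin N → Vec p),
    HasGradientAt (fun x => aLag f A pbar κ w z x lam phi) (G.gh w z h lam phi) h) ∧
  (∀ (w : Fin N → Vec p) (z : Vec p) (h : ℝ) (lam : Fin m → ℝ) (phi : Fin N → Vec p) (l : Fin m),
    HasGradientAt (fun x => aLag f A pbar κ w z h (Function.update lam l x) phi)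
      (G.glam w z h lam phi l) (lam l)) ∧
  (∀ (w : Fin N → Vec p) (z : Vec p) (h : ℝ) (lam : Fin m → ℝ) (phi : Fin N → Vec p) (j : Fin N),
    HasGradientAt (fun x => aLag f A pbar κ w z h lam (Function.update phi j x))
      (G.gphi w z h lam phi j) (phi j))

/-- Assumption 1: the gradient of `L_p` is `L`-Lipschitz with respect to the ℓ²-product
norm on `E = (ℝ^p)^N × ℝ^p × ℝ × ℝ^m × (ℝ^p)^N` (stated in squared form). -/
def LipGrad {N m p : ℕ} (L : ℝ) (G : GradOracle N m p) : Prop :=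
  ∀ (w : Fin N → Vec p) (z : Vec p) (h : ℝ) (lam : Fin m → ℝ) (phi : Fin N → Vec p)
    (w' : Fin N → Vec p) (z' : Vec p) (h' : ℝ) (lam' : Fin m → ℝ) (phi' : Fin N → Vec p),
    (∑ j, ‖G.gw w z h lam phi j - G.gw w' z' h' lam' phi' j‖ ^ 2)
      + ‖G.gz w z h lam phi - G.gz w' z' h' lam' phi'‖ ^ 2
      + ‖G.gh w z h lam phi - G.gh w' z' h' lam' phi'‖ ^ 2
      + (∑ l, ‖G.glam w z h lam phi l - G.glam w' z' h' lam' phi' l‖ ^ 2)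
      + (∑ j, ‖G.gphi w z h lam phi j - G.gphi w' z' h' lam' phi' j‖ ^ 2)
    ≤ L ^ 2 * ((∑ j, ‖w j - w' j‖ ^ 2) + ‖z - z'‖ ^ 2 + ‖h - h'‖ ^ 2
      + (∑ l, ‖lam l - lam' l‖ ^ 2) + (∑ j, ‖phi j - phi' j‖ ^ 2))

/-- `y` is the metric projection of `x` onto the set `C`. -/
def IsProjection {V : Type*} [NormedAddCommGroup V] [InnerProductSpace ℝ V]
    (C : Set V) (x y : V) : Prop :=
  y ∈ C ∧ ∀ u ∈ C, ⟪x - y, u - y⟫ ≤ 0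

section AuxLemmas

theorem young_ineq (a b : ℝ) : a * b ≤ (1 / 2) * a ^ 2 + (1 / 2) * b ^ 2 := by
  nlinarith [sq_nonneg (a - b)]

theorem descent_lemma {V : Type*} [NormedAddCommGroup V] [InnerProductSpace ℝ V] [CompleteSpace V]
    (F : V → ℝ) (g : V → V) (hg : ∀ x, HasGradientAt F (g x) x)
    (L : ℝ) (hlip : ∀ x y, ‖g x - g y‖ ≤ L * ‖x - y‖) (x y : V) :
    F y ≤ F x + ⟪g x, y - x⟫ + L / 2 * ‖y - x‖ ^ 2 := by
  set d := y - x with hd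
  have hline : ∀ s : ℝ, HasDerivAt (fun s : ℝ => F (x + s • d)) ⟪g (x + s • d), d⟫ s := by
    intro s
    have h1 : HasFDerivAt F (InnerProductSpace.toDual ℝ V (g (x + s • d))) (x + s • d) :=
      (hg (x + s • d)).hasFDerivAt
    have h2 : HasDerivAt (fun s : ℝ => x + s • d) d s := by
      simpa using ((hasDerivAt_id s).smul_const d).const_add x
    simpa [Function.comp_def] using h1.comp_hasDerivAt s h2
  set ψ : ℝ → ℝ := fun s => F (x + s • d) - s * ⟪g x, d⟫ - L / 2 * s ^ 2 * ‖d‖ ^ 2 with hψ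
  have hψ' : ∀ s : ℝ, HasDerivAt ψ (⟪g (x + s • d), d⟫ - ⟪g x, d⟫ - L * s * ‖d‖ ^ 2) s := by
    intro s
    have := ((hline s).sub ((hasDerivAt_id s).mul_const ⟪g x, d⟫)).sub
      (((hasDerivAt_pow 2 s).const_mul (L / 2)).mul_const (‖d‖ ^ 2))
    convert this using 1
    case e'_9 => ring
    all_goals rfl
  have hanti : AntitoneOn ψ (Set.Icc (0:ℝ) 1) := by
    apply antitoneOn_of_deriv_nonpos (convex_Icc 0 1)
    · exact fun s _ => ((hψ' s).differentiableAt).continuousAt.continuousWithinAt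
    · intro s _
      exact ((hψ' s).differentiableAt).differentiableWithinAt
    · intro s hs
      rw [interior_Icc] at hs
      rw [(hψ' s).deriv]
      have h1 : ⟪g (x + s • d) - g x, d⟫ ≤ L * s * ‖d‖ ^ 2 := by
        calc ⟪g (x + s • d) - g x, d⟫ ≤ ‖g (x + s • d) - g x‖ * ‖d‖ := real_inner_le_norm _ _
        _ ≤ (L * ‖(x + s • d) - x‖) * ‖d‖ :=
            mul_le_mul_of_nonneg_right (hlip _ _) (norm_nonneg d)
        _ = L * s * ‖d‖ ^ 2 := by
            rw [add_sub_cancel_left, norm_smul, Real.norm_eq_abs, abs_of_pos hs.1]; ring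
      rw [inner_sub_left] at h1
      linarith
  have h01 := hanti (Set.left_mem_Icc.2 zero_le_one) (Set.right_mem_Icc.2 zero_le_one) zero_le_one
  simp only [hψ, zero_smul, add_zero, one_smul, zero_mul, mul_zero, sub_zero, zero_pow, mul_one,
    one_pow] at h01
  have : x + d = y := by rw [hd]; abel
  rw [this] at h01
  linarith

theorem aLag_split {N m p : ℕ} (f : Fin N → Vec p → ℝ) (A : Fin m → Fin N → ℝ) (pbar κ : ℝ)
    (w : Fin N → Vec p) (z : Vec p) (h : ℝ) (lam : Fin m → ℝ) (phi : Fin N → Vec p) :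
    aLag f A pbar κ w z h lam phi
      = (h - (∑ l, lam l) * h)
        + ∑ j, ((∑ l, lam l * (pbar + A l j)) * f j (w j) + ⟪phi j, z - w j⟫
            + (κ / 2) * ‖z - w j‖ ^ 2) := by
  unfold aLag
  rw [Finset.sum_add_distrib, Finset.sum_add_distrib]
  have : ∑ l, lam l * ((∑ j, (pbar + A l j) * f j (w j)) - h)
      = (∑ j, (∑ l, lam l * (pbar + A l j)) * f j (w j)) - (∑ l, lam l) * h := by
    simp only [mul_sub, Finset.sum_sub_distrib, Finset.mul_sum, Finset.sum_mul]
    rw [Finset.sum_comm]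
    congr 1
    · exact Finset.sum_congr rfl fun j _ => Finset.sum_congr rfl fun l _ => by ring
  rw [this]; ring

theorem aLag_update {N m p : ℕ} (f : Fin N → Vec p → ℝ) (A : Fin m → Fin N → ℝ) (pbar κ : ℝ)
    (w : Fin N → Vec p) (z : Vec p) (h : ℝ) (lam : Fin m → ℝ) (phi : Fin N → Vec p)
    (j : Fin N) (x : Vec p) :
    aLag f A pbar κ (Function.update w j x) z h lam phi
      = aLag f A pbar κ w z h lam phi
        + (((∑ l, lam l * (pbar + A l j)) * f j x + ⟪phi j, z - x⟫ + (κ / 2) * ‖z - x‖ ^ 2)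
          - ((∑ l, lam l * (pbar + A l j)) * f j (w j) + ⟪phi j, z - w j⟫
            + (κ / 2) * ‖z - w j‖ ^ 2)) := by
  rw [aLag_split, aLag_split]
  set T : Fin N → Vec p → ℝ := fun j' v =>
    (∑ l, lam l * (pbar + A l j')) * f j' v + ⟪phi j', z - v⟫ + (κ / 2) * ‖z - v‖ ^ 2 with hT
  have key : ∑ j', T j' (Function.update w j x j') = (∑ j', T j' (w j')) + T j x - T j (w j) := by
    have h1 : (fun j' => T j' (Function.update w j x j'))
        = Function.update (fun j' => T j' (w j')) j (T j x) := by
      funext j'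
      by_cases hj : j' = j
      · subst hj; simp
      · simp [Function.update_of_ne hj]
    rw [h1, Finset.sum_update_of_mem (Finset.mem_univ j)]
    rw [Finset.sdiff_singleton_eq_erase, Finset.sum_erase_eq_sub (Finset.mem_univ j)]
    ring
  show _ + ∑ j', T j' (Function.update w j x j') = _
  rw [key]; ring

/-- `∇_{w_j} L_p` depends only on the blocks `(w_j, z, h, λ, φ_j)`. -/
theorem gw_indep {N m p : ℕ} (f : Fin N → Vec p → ℝ) (A : Fin m → Fin N → ℝ) (pbar κ : ℝ)
    (G : GradOracle N m p) (hgrad : IsGradOf f A pbar κ G)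
    (w w' : Fin N → Vec p) (z : Vec p) (h : ℝ) (lam : Fin m → ℝ) (phi phi' : Fin N → Vec p)
    (j : Fin N) (hw : w j = w' j) (hphi : phi j = phi' j) :
    G.gw w z h lam phi j = G.gw w' z h lam phi' j := by
  have h1 := hgrad.1 w z h lam phi j
  have h2 := hgrad.1 w' z h lam phi' j
  rw [← hw] at h2
  set C : ℝ := (aLag f A pbar κ w z h lam phi
      - ((∑ l, lam l * (pbar + A l j)) * f j (w j) + ⟪phi j, z - w j⟫
        + (κ / 2) * ‖z - w j‖ ^ 2))
    - (aLag f A pbar κ w' z h lam phi'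
      - ((∑ l, lam l * (pbar + A l j)) * f j (w' j) + ⟪phi' j, z - w' j⟫
        + (κ / 2) * ‖z - w' j‖ ^ 2)) with hC
  have hfun : (fun x => aLag f A pbar κ (Function.update w j x) z h lam phi)
      = fun x => aLag f A pbar κ (Function.update w' j x) z h lam phi' + C := by
    funext x
    rw [aLag_update, aLag_update, hC, hphi]
    ring
  rw [hfun] at h1
  have h2c : HasGradientAt (fun x => aLag f A pbar κ (Function.update w' j x) z h lam phi' + C)
      (G.gw w' z h lam phi' j) (w j) := by
    rw [hasGradientAt_iff_hasFDerivAt] at h2 ⊢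
    exact h2.add_const C
  exact h1.unique h2c

/-- Restriction of the Lipschitz-gradient assumption to a single `w_j` block. -/
theorem gw_lip {N m p : ℕ} (L : ℝ) (hL : 0 ≤ L) (G : GradOracle N m p) (hlip : LipGrad L G)
    (wb : Fin N → Vec p) (z : Vec p) (h : ℝ) (lam : Fin m → ℝ) (phi : Fin N → Vec p)
    (j : Fin N) (x x' : Vec p) :
    ‖G.gw (Function.update wb j x) z h lam phi j
      - G.gw (Function.update wb j x') z h lam phi j‖ ≤ L * ‖x - x'‖ := by
  have H := hlip (Function.update wb j x) z h lam phi (Function.update wb j x') z h lam phi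
  have hsum : (∑ j', ‖Function.update wb j x j' - Function.update wb j x' j'‖ ^ 2)
      = ‖x - x'‖ ^ 2 := by
    rw [Finset.sum_congr rfl (fun j' _ => show
        ‖Function.update wb j x j' - Function.update wb j x' j'‖ ^ 2
          = if j' = j then ‖x - x'‖ ^ 2 else 0 from by
      by_cases hj : j' = j
      · subst hj; simp
      · simp [Function.update_of_ne hj, hj])]
    simp
  simp only [hsum, sub_self, norm_zero, ne_eq, OfNat.ofNat_ne_zero, not_false_eq_true,
    zero_pow, Finset.sum_const_zero, add_zero] at H
  have hterm : ‖G.gw (Function.update wb j x) z h lam phi j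
      - G.gw (Function.update wb j x') z h lam phi j‖ ^ 2
      ≤ ∑ j', ‖G.gw (Function.update wb j x) z h lam phi j'
        - G.gw (Function.update wb j x') z h lam phi j'‖ ^ 2 :=
    Finset.single_le_sum (f := fun j' => ‖G.gw (Function.update wb j x) z h lam phi j'
        - G.gw (Function.update wb j x') z h lam phi j'‖ ^ 2)
      (fun i _ => by positivity) (Finset.mem_univ j)
  have hnn1 : (0:ℝ) ≤ ‖G.gz (Function.update wb j x) z h lam phi
      - G.gz (Function.update wb j x') z h lam phi‖ ^ 2 := by positivity
  have hnn2 : (0:ℝ) ≤ ‖G.gh (Function.update wb j x) z h lam phi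
      - G.gh (Function.update wb j x') z h lam phi‖ ^ 2 := by positivity
  have hnn3 : (0:ℝ) ≤ ∑ l, ‖G.glam (Function.update wb j x) z h lam phi l
      - G.glam (Function.update wb j x') z h lam phi l‖ ^ 2 :=
    Finset.sum_nonneg fun _ _ => by positivity
  have hnn4 : (0:ℝ) ≤ ∑ j', ‖G.gphi (Function.update wb j x) z h lam phi j'
      - G.gphi (Function.update wb j x') z h lam phi j'‖ ^ 2 :=
    Finset.sum_nonneg fun _ _ => by positivity
  have hsq : ‖G.gw (Function.update wb j x) z h lam phi j
      - G.gw (Function.update wb j x') z h lam phi j‖ ^ 2 ≤ (L * ‖x - x'‖) ^ 2 := by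
    nlinarith [H]
  calc ‖G.gw (Function.update wb j x) z h lam phi j
        - G.gw (Function.update wb j x') z h lam phi j‖
      = Real.sqrt (‖G.gw (Function.update wb j x) z h lam phi j
        - G.gw (Function.update wb j x') z h lam phi j‖ ^ 2) :=
        (Real.sqrt_sq (norm_nonneg _)).symm
    _ ≤ Real.sqrt ((L * ‖x - x'‖) ^ 2) := Real.sqrt_le_sqrt hsq
    _ = L * ‖x - x'‖ := Real.sqrt_sq (by positivity)

end AuxLemmas

/-- **Lemma 1 of ASPIRE-EASE, Eq. (A.1)**: descent produced by the asynchronous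
worker updates of the local variables `w_j`. -/
theorem aspire_lemma1_worker_descent
    {N m p : ℕ} (f : Fin N → Vec p → ℝ) (A : Fin m → Fin N → ℝ) (pbar κ L : ℝ)
    (hκ : 0 < κ) (hL : 0 ≤ L)
    (G : GradOracle N m p) (hgrad : IsGradOf f A pbar κ G) (hlip : LipGrad L G)
    (W Z : Set (Vec p)) (Hset Lamset : Set ℝ) (Phiset : Set (Vec p))
    (hWne : W.Nonempty) (hWcl : IsClosed W) (hWco : Convex ℝ W)
    (hZne : Z.Nonempty) (hZcl : IsClosed Z) (hZco : Convex ℝ Z)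
    (hHne : Hset.Nonempty) (hHcl : IsClosed Hset) (hHco : Convex ℝ Hset)
    (hLne : Lamset.Nonempty) (hLcl : IsClosed Lamset) (hLco : Convex ℝ Lamset)
    (hPne : Phiset.Nonempty) (hPcl : IsClosed Phiset) (hPco : Convex ℝ Phiset)
    (w : ℕ → Fin N → Vec p) (z : ℕ → Vec p) (h : ℕ → ℝ)
    (lam : ℕ → Fin m → ℝ) (phi : ℕ → Fin N → Vec p)
    (hmem : ∀ s, (∀ j, w s j ∈ W) ∧ z s ∈ Z ∧ h s ∈ Hset ∧
      (∀ l, lam s l ∈ Lamset) ∧ (∀ j, phi s j ∈ Phiset))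
    (t τ : ℕ) (hτ : 1 ≤ τ)
    (ηw ηlow : ℝ) (hηw : 0 < ηw) (hηlow : 0 < ηlow) (hηle : ηlow ≤ ηw)
    (Q : Finset (Fin N)) (hQ : Q.Nonempty)
    (tt : Fin N → ℕ)
    (htt : ∀ j ∈ Q, tt j ≤ t ∧ t ≤ tt j + τ)
    (hstale : ∀ j ∈ Q, w t j = w (tt j) j ∧ phi t j = phi (tt j) j)
    (hupdW : ∀ j ∈ Q, IsProjection W
      (w t j - ηlow • G.gw (w (tt j)) (z (tt j)) (h (tt j)) (lam (tt j)) (phi (tt j)) j)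
      (w (t + 1) j))
    (hidleW : ∀ j ∉ Q, w (t + 1) j = w t j)
    (k1 θ : ℝ) (hk1 : 0 < k1) (hθ : 0 < θ)
    (hzb : ∀ j ∈ Q, ‖z t - z (tt j)‖ ^ 2 ≤ (τ : ℝ) * k1 * θ)
    (hhb : ∀ j ∈ Q, ‖h t - h (tt j)‖ ^ 2 ≤ (τ : ℝ) * k1 * θ)
    (hlamb : ∀ j ∈ Q, (∑ l, ‖lam t l - lam (tt j) l‖ ^ 2) ≤ (τ : ℝ) * k1 * θ)
    (hθle : θ ≤ ‖z (t + 1) - z t‖ ^ 2 + ‖h (t + 1) - h t‖ ^ 2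
      + ∑ l, ‖lam (t + 1) l - lam t l‖ ^ 2) :
    aLag f A pbar κ (w (t + 1)) (z t) (h t) (lam t) (phi t)
        - aLag f A pbar κ (w t) (z t) (h t) (lam t) (phi t)
      ≤ (∑ j, ((L + 1) / 2 - 1 / ηw) * ‖w (t + 1) j - w t j‖ ^ 2)
        + 3 * (τ : ℝ) * k1 * (N : ℝ) * L ^ 2 / 2 *
          (‖z (t + 1) - z t‖ ^ 2 + ‖h (t + 1) - h t‖ ^ 2
            + ∑ l, ‖lam (t + 1) l - lam t l‖ ^ 2) := by
  set R : ℝ := ‖z (t + 1) - z t‖ ^ 2 + ‖h (t + 1) - h t‖ ^ 2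
      + ∑ l, ‖lam (t + 1) l - lam t l‖ ^ 2 with hR
  set S : Fin N → Vec p → ℝ := fun j v =>
    (∑ l, lam t l * (pbar + A l j)) * f j v + ⟪phi t j, z t - v⟫
      + (κ / 2) * ‖z t - v‖ ^ 2 with hS
  have hdecomp : aLag f A pbar κ (w (t + 1)) (z t) (h t) (lam t) (phi t)
      - aLag f A pbar κ (w t) (z t) (h t) (lam t) (phi t)
      = ∑ j, (S j (w (t + 1) j) - S j (w t j)) := by
    rw [aLag_split, aLag_split, Finset.sum_sub_distrib]
    ring
  have hjQ : ∀ j ∈ Q, S j (w (t + 1) j) - S j (w t j)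
      ≤ ((L + 1) / 2 - 1 / ηw) * ‖w (t + 1) j - w t j‖ ^ 2 + 3 * (τ : ℝ) * k1 * L ^ 2 / 2 * θ := by
    intro j hj
    obtain ⟨hw_st, hphi_st⟩ := hstale j hj
    set gj : Vec p := G.gw (w t) (z t) (h t) (lam t) (phi t) j with hgjdef
    set gtil : Vec p := G.gw (w (tt j)) (z (tt j)) (h (tt j)) (lam (tt j)) (phi (tt j)) j
      with hgtildef
    set Δ : Vec p := w (t + 1) j - w t j with hΔ
    -- descent lemma for the j-th block
    set Fj : Vec p → ℝ := fun x =>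
      aLag f A pbar κ (Function.update (w t) j x) (z t) (h t) (lam t) (phi t) with hFj
    set gfun : Vec p → Vec p := fun x =>
      G.gw (Function.update (w t) j x) (z t) (h t) (lam t) (phi t) j with hgfun
    have hgj : ∀ x, HasGradientAt Fj (gfun x) x := by
      intro x
      have h0 := hgrad.1 (Function.update (w t) j x) (z t) (h t) (lam t) (phi t) j
      simp only [Function.update_idem, Function.update_self] at h0
      exact h0
    have hlipj : ∀ x x', ‖gfun x - gfun x'‖ ≤ L * ‖x - x'‖ := fun x x' =>
      gw_lip L hL G hlip (w t) (z t) (h t) (lam t) (phi t) j x x'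
    have hdesc := descent_lemma Fj gfun hgj L hlipj (w t j) (w (t + 1) j)
    have hFx : Fj (w t j) = aLag f A pbar κ (w t) (z t) (h t) (lam t) (phi t) := by
      rw [hFj]; simp [Function.update_eq_self]
    have hFy : Fj (w (t + 1) j)
        = aLag f A pbar κ (w t) (z t) (h t) (lam t) (phi t)
          + (S j (w (t + 1) j) - S j (w t j)) := by
      rw [hFj]
      exact aLag_update f A pbar κ (w t) (z t) (h t) (lam t) (phi t) j (w (t + 1) j)
    have hgx : gfun (w t j) = gj := by
      rw [hgfun, hgjdef]; simp [Function.update_eq_self]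
    rw [hFx, hFy, hgx] at hdesc
    -- projection inequality
    have hproj := (hupdW j hj).2 (w t j) ((hmem t).1 j)
    have hexp : (w t j - ηlow • gtil) - w (t + 1) j = -Δ - ηlow • gtil := by
      rw [hΔ]; abel
    rw [hexp, show w t j - w (t + 1) j = -Δ from by rw [hΔ]; abel] at hproj
    have hproj' : ‖Δ‖ ^ 2 + ηlow * ⟪gtil, Δ⟫ ≤ 0 := by
      have : ⟪-Δ - ηlow • gtil, -Δ⟫
          = ‖Δ‖ ^ 2 + ηlow * ⟪gtil, Δ⟫ := by
        rw [inner_sub_left, inner_neg_neg, inner_neg_right, real_inner_smul_left,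
          real_inner_self_eq_norm_sq]
        ring
      linarith [hproj, this.symm.trans_le hproj]
    have hinner : ⟪gtil, Δ⟫ ≤ -(1 / ηw) * ‖Δ‖ ^ 2 := by
      have h1 : ⟪gtil, Δ⟫ ≤ -(1 / ηlow) * ‖Δ‖ ^ 2 := by
        rw [← mul_le_mul_iff_right₀ hηlow]
        have heq : ηlow * (-(1 / ηlow) * ‖Δ‖ ^ 2) = -‖Δ‖ ^ 2 := by
          field_simp
        rw [heq]
        linarith
      have h2 : (1 : ℝ) / ηw ≤ 1 / ηlow := one_div_le_one_div_of_le hηlow hηle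
      have h3 : (1 / ηw) * ‖Δ‖ ^ 2 ≤ (1 / ηlow) * ‖Δ‖ ^ 2 :=
        mul_le_mul_of_nonneg_right h2 (sq_nonneg ‖Δ‖)
      linarith
    -- gradient error bound
    have hgjeq : gj = G.gw (w (tt j)) (z t) (h t) (lam t) (phi (tt j)) j :=
      gw_indep f A pbar κ G hgrad (w t) (w (tt j)) (z t) (h t) (lam t)
        (phi t) (phi (tt j)) j hw_st hphi_st
    have Herr : ‖gj - gtil‖ ^ 2 ≤ L ^ 2 * (3 * (τ : ℝ) * k1 * θ) := by
      rw [hgjeq, hgtildef]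
      have H := hlip (w (tt j)) (z t) (h t) (lam t) (phi (tt j))
        (w (tt j)) (z (tt j)) (h (tt j)) (lam (tt j)) (phi (tt j))
      simp only [sub_self, norm_zero, Finset.sum_const, smul_eq_mul, mul_zero, smul_zero,
        ne_eq, OfNat.ofNat_ne_zero, not_false_eq_true, zero_pow, add_zero, zero_add,
        Finset.sum_const_zero] at H
      have hterm : ‖G.gw (w (tt j)) (z t) (h t) (lam t) (phi (tt j)) j
          - G.gw (w (tt j)) (z (tt j)) (h (tt j)) (lam (tt j)) (phi (tt j)) j‖ ^ 2
          ≤ ∑ j', ‖G.gw (w (tt j)) (z t) (h t) (lam t) (phi (tt j)) j'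
            - G.gw (w (tt j)) (z (tt j)) (h (tt j)) (lam (tt j)) (phi (tt j)) j'‖ ^ 2 :=
        Finset.single_le_sum (f := fun j' => ‖G.gw (w (tt j)) (z t) (h t) (lam t) (phi (tt j)) j'
            - G.gw (w (tt j)) (z (tt j)) (h (tt j)) (lam (tt j)) (phi (tt j)) j'‖ ^ 2)
          (fun i _ => by positivity) (Finset.mem_univ j)
      have hnn1 : (0:ℝ) ≤ ‖G.gz (w (tt j)) (z t) (h t) (lam t) (phi (tt j))
          - G.gz (w (tt j)) (z (tt j)) (h (tt j)) (lam (tt j)) (phi (tt j))‖ ^ 2 := by positivity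
      have hnn2 : (0:ℝ) ≤ ‖G.gh (w (tt j)) (z t) (h t) (lam t) (phi (tt j))
          - G.gh (w (tt j)) (z (tt j)) (h (tt j)) (lam (tt j)) (phi (tt j))‖ ^ 2 := by positivity
      have hnn3 : (0:ℝ) ≤ ∑ l, ‖G.glam (w (tt j)) (z t) (h t) (lam t) (phi (tt j)) l
          - G.glam (w (tt j)) (z (tt j)) (h (tt j)) (lam (tt j)) (phi (tt j)) l‖ ^ 2 :=
        Finset.sum_nonneg fun _ _ => by positivity
      have hnn4 : (0:ℝ) ≤ ∑ j', ‖G.gphi (w (tt j)) (z t) (h t) (lam t) (phi (tt j)) j'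
          - G.gphi (w (tt j)) (z (tt j)) (h (tt j)) (lam (tt j)) (phi (tt j)) j'‖ ^ 2 :=
        Finset.sum_nonneg fun _ _ => by positivity
      have hz := hzb j hj
      have hh := hhb j hj
      have hlm := hlamb j hj
      have hmul : L ^ 2 * (‖z t - z (tt j)‖ ^ 2 + ‖h t - h (tt j)‖ ^ 2
          + ∑ l, ‖lam t l - lam (tt j) l‖ ^ 2) ≤ L ^ 2 * (3 * (τ : ℝ) * k1 * θ) := by
        apply mul_le_mul_of_nonneg_left _ (sq_nonneg L)
        linarith
      linarith [H, hterm, hnn1, hnn2, hnn3, hnn4, hmul]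
    -- combine
    have hsplit : ⟪gj, Δ⟫ = ⟪gtil, Δ⟫ + ⟪gj - gtil, Δ⟫ := by
      rw [inner_sub_left]; ring
    have hcross : ⟪gj - gtil, Δ⟫ ≤ (1 / 2) * ‖gj - gtil‖ ^ 2 + (1 / 2) * ‖Δ‖ ^ 2 :=
      calc ⟪gj - gtil, Δ⟫ ≤ ‖gj - gtil‖ * ‖Δ‖ := real_inner_le_norm _ _
        _ ≤ (1 / 2) * ‖gj - gtil‖ ^ 2 + (1 / 2) * ‖Δ‖ ^ 2 := young_ineq _ _
    have hΔy : w (t + 1) j - w t j = Δ := hΔ.symm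
    rw [hΔy] at hdesc
    linarith
  calc aLag f A pbar κ (w (t + 1)) (z t) (h t) (lam t) (phi t)
      - aLag f A pbar κ (w t) (z t) (h t) (lam t) (phi t)
      = ∑ j, (S j (w (t + 1) j) - S j (w t j)) := hdecomp
    _ ≤ ∑ j, (((L + 1) / 2 - 1 / ηw) * ‖w (t + 1) j - w t j‖ ^ 2
        + if j ∈ Q then 3 * (τ : ℝ) * k1 * L ^ 2 / 2 * θ else 0) := by
        apply Finset.sum_le_sum
        intro j _
        by_cases hj : j ∈ Q
        · rw [if_pos hj]; exact hjQ j hj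
        · rw [if_neg hj, hidleW j hj]
          simp
    _ = (∑ j, ((L + 1) / 2 - 1 / ηw) * ‖w (t + 1) j - w t j‖ ^ 2)
        + (Q.card : ℝ) * (3 * (τ : ℝ) * k1 * L ^ 2 / 2 * θ) := by
        rw [Finset.sum_add_distrib, Finset.sum_ite_mem, Finset.univ_inter,
          Finset.sum_const, nsmul_eq_mul]
    _ ≤ (∑ j, ((L + 1) / 2 - 1 / ηw) * ‖w (t + 1) j - w t j‖ ^ 2)
        + 3 * (τ : ℝ) * k1 * (N : ℝ) * L ^ 2 / 2 * R := by
        have hcard : (Q.card : ℝ) ≤ (N : ℝ) := by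
          exact_mod_cast (Finset.card_le_univ Q).trans_eq (Finset.card_univ.trans (Fintype.card_fin N))
        have hθR : θ ≤ R := hθle
        have hc0 : (0:ℝ) ≤ 3 * (τ : ℝ) * k1 * L ^ 2 / 2 := by positivity
        have hN0 : (0:ℝ) ≤ (N : ℝ) := Nat.cast_nonneg N
        have h1 : (Q.card : ℝ) * θ ≤ (N : ℝ) * R := by
          calc (Q.card : ℝ) * θ ≤ (N : ℝ) * θ := mul_le_mul_of_nonneg_right hcard hθ.le
            _ ≤ (N : ℝ) * R := mul_le_mul_of_nonneg_left hθR hN0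
        have h2 : 3 * (τ : ℝ) * k1 * L ^ 2 / 2 * ((Q.card : ℝ) * θ)
            ≤ 3 * (τ : ℝ) * k1 * L ^ 2 / 2 * ((N : ℝ) * R) :=
          mul_le_mul_of_nonneg_left h1 hc0
        have h3 : (Q.card : ℝ) * (3 * (τ : ℝ) * k1 * L ^ 2 / 2 * θ)
            = 3 * (τ : ℝ) * k1 * L ^ 2 / 2 * ((Q.card : ℝ) * θ) := by ring
        have h4 : 3 * (τ : ℝ) * k1 * (N : ℝ) * L ^ 2 / 2 * R
            = 3 * (τ : ℝ) * k1 * L ^ 2 / 2 * ((N : ℝ) * R) := by ring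
        rw [h3, h4]
        linarith
end
end

section
/- Eq. (A.25) of ASPIRE-EASE (control of the regularized dual ascent in λ): Suppose Assumption 1 holds, the sequence (c₁^s)_{s≥0} is positive and nonincreasing, and ρ₁ ≤ 2/(L + 2c₁⁰). Suppose that for each l ∈ {1,…,m}: λ_l^{t+1} is the metric projection onto Λ of λ_l^t + ρ₁·∇_{λ_l}L̃_p(w^{t+1}, z^{t+1}, h^{t+1}, λ^t, φ^t) where L̃_p uses regularization parameters (c₁^t, c₂^t), and λ_l^t is the metric projection onto Λ of λ_l^{t−1} + ρ₁·∇_{λ_l}L̃_p(w^t, z^t, h^t, λ^{t−1}, φ^{t−1}) where L̃_p uses parameters (c₁^{t−1}, c₂^{t−1}). Then for every constant a₁ > 0: L_p(w^{t+1}, z^{t+1}, h^{t+1}, λ^{t+1}, φ^t) − L_p(w^{t+1}, z^{t+1}, h^{t+1}, λ^t, φ^t) ≤ (mL²/(2a₁))·(Σ_{j=1}^N‖w_j^{t+1} − w_j^t‖² + ‖z^{t+1} − z^t‖² + ‖h^{t+1} − h^t‖²) + (a₁/2 − (c₁^{t−1} − c₁^t)/2 + 1/(2ρ₁))·Σ_{l=1}^m‖λ_l^{t+1}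 − λ_l^t‖² + (c₁^{t−1}/2)·Σ_{l=1}^m(‖λ_l^{t+1}‖² − ‖λ_l^t‖²) + (1/(2ρ₁))·Σ_{l=1}^m‖λ_l^t − λ_l^{t−1}‖². -/
open scoped RealInnerProductSpace

noncomputable section

/-- Scalar core inequality behind (A.25). -/
lemma aspire_scalar_key (a1 ρ1 c' c g g' l1 l0 lm : ℝ)
    (ha1 : 0 < a1) (hρ1 : 0 < ρ1) (hc' : 0 < c') (hc : 0 < c)
    (hβ : ρ1 * c' ≤ 1)
    (hP2 : (lm + ρ1 * (g' - c' * lm) - l0) * (l1 - l0) ≤ 0) :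
    (l1 - l0) * g ≤ (g - g')^2/(2*a1) + (a1/2 - (c' - c)/2 + 1/(2*ρ1)) * (l1-l0)^2
      + (c'/2) * (l1^2 - l0^2) + (1/(2*ρ1)) * (l0-lm)^2 := by
  have h2 : (0:ℝ) < 2*a1*ρ1 := by positivity
  rw [← mul_le_mul_iff_of_pos_right h2]
  have hexp : ((g - g')^2/(2*a1) + (a1/2 - (c' - c)/2 + 1/(2*ρ1)) * (l1-l0)^2
      + (c'/2) * (l1^2 - l0^2) + (1/(2*ρ1)) * (l0-lm)^2) * (2*a1*ρ1)
      = ρ1*(g-g')^2 + a1*ρ1*(a1 - c' + c)*(l1-l0)^2 + a1*(l1-l0)^2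
        + a1*ρ1*c'*(l1^2-l0^2) + a1*(l0-lm)^2 := by
    field_simp; ring
  rw [hexp]
  nlinarith [mul_nonneg hρ1.le (sq_nonneg (g - g' - a1*(l1-l0))),
    mul_nonneg (mul_nonneg ha1.le (by linarith : (0:ℝ) ≤ 1 - ρ1*c')) (sq_nonneg ((l0-lm) - (l1-l0))),
    mul_nonneg (mul_nonneg ha1.le (mul_nonneg hρ1.le hc'.le)) (sq_nonneg (l0-lm)),
    mul_nonneg (mul_nonneg ha1.le (mul_nonneg hρ1.le hc'.le)) (sq_nonneg (l1-l0)),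
    mul_nonneg (mul_nonneg ha1.le (mul_nonneg hρ1.le hc.le)) (sq_nonneg (l1-l0)),
    mul_nonneg ha1.le (le_of_lt hρ1), hP2, ha1, mul_pos ha1 hρ1]

lemma aspire_lam_sum_update {m : ℕ} (lam : Fin m → ℝ) (l : Fin m) (y : ℝ) (c : Fin m → ℝ) :
    ∑ l', Function.update lam l y l' * c l'
      = y * c l + ∑ l' ∈ Finset.univ.erase l, lam l' * c l' := by
  rw [← Finset.add_sum_erase _ _ (Finset.mem_univ l)]
  congr 1
  · simp
  · exact Finset.sum_congr rfl fun l' hl' => by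
      rw [Function.update_of_ne (Finset.ne_of_mem_erase hl')]

lemma aspire_aLag_update_lam {N m p : ℕ} (f : Fin N → Vec p → ℝ) (A : Fin m → Fin N → ℝ)
    (pbar κ : ℝ) (w : Fin N → Vec p) (z : Vec p) (h : ℝ) (lam : Fin m → ℝ)
    (phi : Fin N → Vec p) (l : Fin m) (y : ℝ) :
    aLag f A pbar κ w z h (Function.update lam l y) phi
      = ((∑ j, (pbar + A l j) * f j (w j)) - h) * y
        + aLag f A pbar κ w z h (Function.update lam l 0) phi := by
  simp only [aLag, aspire_lam_sum_update]
  ring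

/-- The λ-block gradient of `aLag` is the affine slope. -/
lemma aspire_glam_eq {N m p : ℕ} (f : Fin N → Vec p → ℝ) (A : Fin m → Fin N → ℝ) (pbar κ : ℝ)
    (g : ℝ) (w : Fin N → Vec p) (z : Vec p) (h : ℝ) (lam : Fin m → ℝ) (phi : Fin N → Vec p)
    (l : Fin m)
    (hgl : HasGradientAt (fun x => aLag f A pbar κ w z h (Function.update lam l x) phi)
      g (lam l)) :
    g = (∑ j, (pbar + A l j) * f j (w j)) - h := by
  have hfe : (fun x => aLag f A pbar κ w z h (Function.update lam l x) phi)
      = fun x => ((∑ j, (pbar + A l j) * f j (w j)) - h) * x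
        + aLag f A pbar κ w z h (Function.update lam l 0) phi :=
    funext fun x => aspire_aLag_update_lam f A pbar κ w z h lam phi l x
  rw [hfe] at hgl
  have hd : HasDerivAt (fun x : ℝ => ((∑ j, (pbar + A l j) * f j (w j)) - h) * x
      + aLag f A pbar κ w z h (Function.update lam l 0) phi)
      ((∑ j, (pbar + A l j) * f j (w j)) - h) (lam l) := by
    simpa using ((hasDerivAt_id (lam l)).const_mul
      ((∑ j, (pbar + A l j) * f j (w j)) - h)).add_const
        (aLag f A pbar κ w z h (Function.update lam l 0) phi)
  exact hgl.unique hd.hasGradientAt'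

lemma aspire_aLag_lam_sub {N m p : ℕ} (f : Fin N → Vec p → ℝ) (A : Fin m → Fin N → ℝ)
    (pbar κ : ℝ) (w : Fin N → Vec p) (z : Vec p) (h : ℝ) (lam lam' : Fin m → ℝ)
    (phi : Fin N → Vec p) :
    aLag f A pbar κ w z h lam' phi - aLag f A pbar κ w z h lam phi
      = ∑ l, (lam' l - lam l) * ((∑ j, (pbar + A l j) * f j (w j)) - h) := by
  simp only [aLag]
  rw [show (∑ l, (lam' l - lam l) * ((∑ j, (pbar + A l j) * f j (w j)) - h))
    = (∑ l, lam' l * ((∑ j, (pbar + A l j) * f j (w j)) - h))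
      - ∑ l, lam l * ((∑ j, (pbar + A l j) * f j (w j)) - h) from by
      rw [← Finset.sum_sub_distrib]; exact Finset.sum_congr rfl fun l _ => by ring]
  ring

lemma aspire_div_bound (Q S a1 L mR : ℝ) (ha1 : 0 < a1) (hS : 0 ≤ S) (hm1 : 1 ≤ mR)
    (hq : Q ≤ L^2 * S) : Q / (2*a1) ≤ (mR * L^2/(2*a1)) * S := by
  have h2a : (0:ℝ) < 2*a1 := by linarith
  rw [div_le_iff₀ h2a]
  have hrw : (mR * L^2/(2*a1)) * S * (2*a1) = mR * (L^2 * S) := by field_simp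
  rw [hrw]
  nlinarith [mul_nonneg (by linarith : (0:ℝ) ≤ mR - 1) (mul_nonneg (sq_nonneg L) hS)]

set_option maxHeartbeats 2000000 in
/-- **Eq. (A.25) of ASPIRE-EASE**: control of the regularized dual ascent in `λ`. -/
theorem aspire_eq_A25
    {N m p : ℕ} (f : Fin N → Vec p → ℝ) (A : Fin m → Fin N → ℝ) (pbar κ L : ℝ)
    (hκ : 0 < κ) (hL : 0 ≤ L)
    (G : GradOracle N m p) (hgrad : IsGradOf f A pbar κ G) (hlip : LipGrad L G)
    (Lamset : Set ℝ)
    (hLne : Lamset.Nonempty) (hLcl : IsClosed Lamset) (hLco : Convex ℝ Lamset)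
    (w : ℕ → Fin N → Vec p) (z : ℕ → Vec p) (h : ℕ → ℝ)
    (lam : ℕ → Fin m → ℝ) (phi : ℕ → Fin N → Vec p)
    (c1 : ℕ → ℝ) (hc1pos : ∀ s, 0 < c1 s) (hc1anti : Antitone c1)
    (ρ1 : ℝ) (hρ1 : 0 < ρ1) (hρ1le : ρ1 ≤ 2 / (L + 2 * c1 0))
    (t : ℕ) (ht : 1 ≤ t)
    (hupdLam1 : ∀ l, IsProjection Lamset
      (lam t l + ρ1 * (G.glam (w (t + 1)) (z (t + 1)) (h (t + 1)) (lam t) (phi t) l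
        - c1 t * lam t l)) (lam (t + 1) l))
    (hupdLam0 : ∀ l, IsProjection Lamset
      (lam (t - 1) l + ρ1 * (G.glam (w t) (z t) (h t) (lam (t - 1)) (phi (t - 1)) l
        - c1 (t - 1) * lam (t - 1) l)) (lam t l)) :
    ∀ a1 : ℝ, 0 < a1 →
      aLag f A pbar κ (w (t + 1)) (z (t + 1)) (h (t + 1)) (lam (t + 1)) (phi t)
          - aLag f A pbar κ (w (t + 1)) (z (t + 1)) (h (t + 1)) (lam t) (phi t)
        ≤ ((m : ℝ) * L ^ 2 / (2 * a1)) *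
            ((∑ j, ‖w (t + 1) j - w t j‖ ^ 2) + ‖z (t + 1) - z t‖ ^ 2 + ‖h (t + 1) - h t‖ ^ 2)
          + (a1 / 2 - (c1 (t - 1) - c1 t) / 2 + 1 / (2 * ρ1)) *
            (∑ l, ‖lam (t + 1) l - lam t l‖ ^ 2)
          + (c1 (t - 1) / 2) * (∑ l, (‖lam (t + 1) l‖ ^ 2 - ‖lam t l‖ ^ 2))
          + (1 / (2 * ρ1)) * (∑ l, ‖lam t l - lam (t - 1) l‖ ^ 2)  := by
  intro a1 ha1
  rcases Nat.eq_zero_or_pos m with hm0 | hm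
  · subst hm0
    have hz : ∀ lam' : Fin 0 → ℝ,
        aLag f A pbar κ (w (t+1)) (z (t+1)) (h (t+1)) lam' (phi t)
          = aLag f A pbar κ (w (t+1)) (z (t+1)) (h (t+1)) (lam t) (phi t) := by
      intro lam'; simp [aLag]
    rw [hz]
    simp
  -- identify the λ-gradients
  have hge : ∀ (w' : Fin N → Vec p) (z' : Vec p) (h' : ℝ) (lam' : Fin m → ℝ)
      (phi' : Fin N → Vec p) (l : Fin m),
      G.glam w' z' h' lam' phi' l = (∑ j, (pbar + A l j) * f j (w' j)) - h' :=
    fun w' z' h' lam' phi' l =>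
      aspire_glam_eq f A pbar κ _ w' z' h' lam' phi' l (hgrad.2.2.2.1 w' z' h' lam' phi' l)
  have hc'pos := hc1pos (t-1)
  have hcpos := hc1pos t
  have hden : 0 < L + 2 * c1 0 := by linarith [hc1pos 0]
  have hρβ : ρ1 * c1 (t-1) ≤ 1 := by
    have h1 : ρ1 * (L + 2 * c1 0) ≤ 2 := by
      have := (le_div_iff₀ hden).mp hρ1le; linarith
    have h2 : c1 (t-1) ≤ c1 0 := hc1anti (Nat.zero_le _)
    nlinarith [mul_nonneg hρ1.le hL, mul_le_mul_of_nonneg_left h2 hρ1.le]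
  -- projection inequality at step t, tested against λ^{t+1}
  have hP2 : ∀ l : Fin m,
      (lam (t-1) l + ρ1 * (((∑ j, (pbar + A l j) * f j (w t j)) - h t)
          - c1 (t-1) * lam (t-1) l) - lam t l) * (lam (t+1) l - lam t l) ≤ 0 := by
    intro l
    have hmem := (hupdLam1 l).1
    have := (hupdLam0 l).2 (lam (t+1) l) hmem
    rw [hge] at this
    simp [RCLike.inner_apply] at this
    linarith [this]
  -- per-coordinate key inequality
  have hkey : ∀ l : Fin m,
      (lam (t+1) l - lam t l) * ((∑ j, (pbar + A l j) * f j (w (t+1) j)) - h (t+1))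
        ≤ (((∑ j, (pbar + A l j) * f j (w (t+1) j)) - h (t+1))
              - ((∑ j, (pbar + A l j) * f j (w t j)) - h t))^2 / (2*a1)
          + (a1/2 - (c1 (t-1) - c1 t)/2 + 1/(2*ρ1)) * (lam (t+1) l - lam t l)^2
          + (c1 (t-1)/2) * ((lam (t+1) l)^2 - (lam t l)^2)
          + (1/(2*ρ1)) * (lam t l - lam (t-1) l)^2 :=
    fun l => aspire_scalar_key a1 ρ1 (c1 (t-1)) (c1 t) _ _ _ _ _
      ha1 hρ1 hc'pos hcpos hρβ (hP2 l)
  -- Lipschitz bound on the λ-gradient differences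
  have hlipA := hlip (w (t+1)) (z (t+1)) (h (t+1)) (lam t) (phi t)
    (w t) (z t) (h t) (lam t) (phi t)
  simp only [hge, sub_self, norm_zero, ne_eq, OfNat.ofNat_ne_zero, not_false_eq_true,
    zero_pow, Finset.sum_const_zero, add_zero, Real.norm_eq_abs, sq_abs] at hlipA
  have hnn1 : 0 ≤ ∑ j, ‖G.gw (w (t+1)) (z (t+1)) (h (t+1)) (lam t) (phi t) j
      - G.gw (w t) (z t) (h t) (lam t) (phi t) j‖^2 :=
    Finset.sum_nonneg fun _ _ => sq_nonneg _
  have hnn2 : 0 ≤ ‖G.gz (w (t+1)) (z (t+1)) (h (t+1)) (lam t) (phi t)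
      - G.gz (w t) (z t) (h t) (lam t) (phi t)‖^2 := sq_nonneg _
  have hnn3 : 0 ≤ (G.gh (w (t+1)) (z (t+1)) (h (t+1)) (lam t) (phi t)
      - G.gh (w t) (z t) (h t) (lam t) (phi t))^2 := sq_nonneg _
  have hnn4 : 0 ≤ ∑ j, ‖G.gphi (w (t+1)) (z (t+1)) (h (t+1)) (lam t) (phi t) j
      - G.gphi (w t) (z t) (h t) (lam t) (phi t) j‖^2 :=
    Finset.sum_nonneg fun _ _ => sq_nonneg _
  have hq : (∑ l, (((∑ j, (pbar + A l j) * f j (w (t+1) j)) - h (t+1))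
        - ((∑ j, (pbar + A l j) * f j (w t j)) - h t))^2)
      ≤ L^2 * ((∑ j, ‖w (t+1) j - w t j‖^2) + ‖z (t+1) - z t‖^2 + (h (t+1) - h t)^2) := by
    linarith [hlipA]
  have hS : 0 ≤ (∑ j, ‖w (t+1) j - w t j‖^2) + ‖z (t+1) - z t‖^2 + (h (t+1) - h t)^2 :=
    add_nonneg (add_nonneg (Finset.sum_nonneg fun _ _ => sq_nonneg _) (sq_nonneg _))
      (sq_nonneg _)
  have hm1 : (1:ℝ) ≤ (m:ℝ) := Nat.one_le_cast.2 hm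
  have hqm : (∑ l, (((∑ j, (pbar + A l j) * f j (w (t+1) j)) - h (t+1))
        - ((∑ j, (pbar + A l j) * f j (w t j)) - h t))^2) / (2*a1)
      ≤ ((m:ℝ) * L^2 / (2*a1)) *
          ((∑ j, ‖w (t+1) j - w t j‖^2) + ‖z (t+1) - z t‖^2 + (h (t+1) - h t)^2) :=
    aspire_div_bound _ _ a1 L (m:ℝ) ha1 hS hm1 hq
  -- put everything together
  rw [show aLag f A pbar κ (w (t + 1)) (z (t + 1)) (h (t + 1)) (lam (t + 1)) (phi t)
      - aLag f A pbar κ (w (t + 1)) (z (t + 1)) (h (t + 1)) (lam t) (phi t)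
    = ∑ l, (lam (t+1) l - lam t l) * ((∑ j, (pbar + A l j) * f j (w (t+1) j)) - h (t+1))
    from aspire_aLag_lam_sub f A pbar κ _ _ _ _ _ _]
  simp only [Real.norm_eq_abs, sq_abs]
  have hsum1 := Finset.sum_le_sum (fun l (_ : l ∈ Finset.univ) => hkey l)
  have hsplit : (∑ l : Fin m, ((((∑ j, (pbar + A l j) * f j (w (t+1) j)) - h (t+1))
              - ((∑ j, (pbar + A l j) * f j (w t j)) - h t))^2 / (2*a1)
          + (a1/2 - (c1 (t-1) - c1 t)/2 + 1/(2*ρ1)) * (lam (t+1) l - lam t l)^2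
          + (c1 (t-1)/2) * ((lam (t+1) l)^2 - (lam t l)^2)
          + (1/(2*ρ1)) * (lam t l - lam (t-1) l)^2))
      = (∑ l : Fin m, (((∑ j, (pbar + A l j) * f j (w (t+1) j)) - h (t+1))
              - ((∑ j, (pbar + A l j) * f j (w t j)) - h t))^2) / (2*a1)
        + (a1/2 - (c1 (t-1) - c1 t)/2 + 1/(2*ρ1)) * (∑ l, (lam (t+1) l - lam t l)^2)
        + (c1 (t-1)/2) * (∑ l, ((lam (t+1) l)^2 - (lam t l)^2))
        + (1/(2*ρ1)) * (∑ l, (lam t l - lam (t-1) l)^2) := by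
    rw [Finset.sum_add_distrib, Finset.sum_add_distrib, Finset.sum_add_distrib,
      ← Finset.sum_div, ← Finset.mul_sum, ← Finset.mul_sum, ← Finset.mul_sum]
  rw [hsplit] at hsum1
  linarith [hsum1, hqm]
end
end

section
/- Eq. (A.39) of ASPIRE-EASE (control of the asynchronous regularized dual ascent in φ): Suppose Assumption 1 holds, the sequence (c₂^s)_{s≥0} is positive and nonincreasing, and ρ₂ ≤ 2/(L + 2c₂⁰). Let Q ⊆ {1,…,N} with |Q| = S′. Suppose that for each j ∈ Q, φ_j^{t+1} is the metric projection onto Φ of φ_j^t + ρ₂·∇_{φ_j}L̃_p(w^{t+1}, z^{t+1}, h^{t+1}, λ^{t+1}, φ^t) where L̃_p uses regularization parameters (c₁^t, c₂^t), while φ_j^{t+1} = φ_j^t for j ∉ Q; and that for every j, ⟨∇_{φ_j}L̃_p(w^t, z^t, h^t, λ^t, φ^{t−1}) − (1/ρ₂)(φ_j^t − φ_j^{t−1}), φ_j^{t+1} − φ_j^t⟩ ≤ 0, where this L̃_p uses parameters (c₁^{t−1}, c₂^{t−1}). Then for every constant a₃ > 0: L_p(w^{t+1}, z^{t+1}, h^{t+1},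 λ^{t+1}, φ^{t+1}) − L_p(w^{t+1}, z^{t+1}, h^{t+1}, λ^{t+1}, φ^t) ≤ (S′L²/(2a₃))·(Σ_{j=1}^N‖w_j^{t+1} − w_j^t‖² + ‖z^{t+1} − z^t‖² + ‖h^{t+1} − h^t‖²) + (a₃/2 − (c₂^{t−1} − c₂^t)/2 + 1/(2ρ₂))·Σ_{j=1}^N‖φ_j^{t+1} − φ_j^t‖² + (c₂^{t−1}/2)·Σ_{j=1}^N(‖φ_j^{t+1}‖² − ‖φ_j^t‖²) + (1/(2ρ₂))·Σ_{j=1}^N‖φ_j^t − φ_j^{t−1}‖². -/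
open scoped RealInnerProductSpace

noncomputable section

/-!
Since `L_p` is affine in `φ` with `∇_{φ_j} L_p = z - w_j`, the increase of `L_p` in the `φ`-step
is `∑_j ⟪φ_j^{t+1} - φ_j^t, z^{t+1} - w_j^{t+1}⟫`, and idle blocks contribute nothing.
For an active block, split the gradient `z^{t+1} - w_j^{t+1}` into the old gradient
`z^t - w_j^t` plus its change. The pairing with the old gradient is controlled by the variational
inequality of the previous projected step, using polarization and
`⟪e, d⟫ ≤ (‖e‖² + ‖d‖²) / 2`; the latter is weighted by `1/ρ₂ - c₂^{t-1}`, which is nonnegative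
by the step-size condition. The change of gradient is handled by Young's inequality with weight
`a₃` and the Lipschitz bound, once per active block, which produces the factor `S'`.
-/
theorem aLag_sub_aLag_phi {N m p : ℕ} (f : Fin N → Vec p → ℝ) (A : Fin m → Fin N → ℝ)
    (pbar κ : ℝ) (w : Fin N → Vec p) (z : Vec p) (h : ℝ) (lam : Fin m → ℝ)
    (phi phi' : Fin N → Vec p) :
    aLag f A pbar κ w z h lam phi' - aLag f A pbar κ w z h lam phi
      = ∑ j, ⟪phi' j - phi j, z - w j⟫ := by
  simp only [aLag, inner_sub_left, Finset.sum_sub_distrib]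
  ring

theorem hasGradientAt_aLag_phi {N m p : ℕ} (f : Fin N → Vec p → ℝ) (A : Fin m → Fin N → ℝ)
    (pbar κ : ℝ) (w : Fin N → Vec p) (z : Vec p) (h : ℝ) (lam : Fin m → ℝ)
    (phi : Fin N → Vec p) (j : Fin N) :
    HasGradientAt (fun x => aLag f A pbar κ w z h lam (Function.update phi j x))
      (z - w j) (phi j) := by
  have hL : ∀ x, aLag f A pbar κ w z h lam (Function.update phi j x)
      = aLag f A pbar κ w z h lam phi + ⟪z - w j, x⟫ - ⟪z - w j, phi j⟫ := by
    intro x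
    have hsum := aLag_sub_aLag_phi f A pbar κ w z h lam phi (Function.update phi j x)
    rw [Finset.sum_eq_single j (fun i _ hij => by simp [hij]) (by simp),
      Function.update_self, real_inner_comm, inner_sub_right] at hsum
    linarith
  simp only [hL]
  exact (((InnerProductSpace.toDual ℝ (Vec p) (z - w j)).hasFDerivAt).const_add _).sub_const _

theorem IsGradOf.gphi_eq {N m p : ℕ} {f : Fin N → Vec p → ℝ} {A : Fin m → Fin N → ℝ}
    {pbar κ : ℝ} {G : GradOracle N m p} (hG : IsGradOf f A pbar κ G)
    (w : Fin N → Vec p) (z : Vec p) (h : ℝ) (lam : Fin m → ℝ) (phi : Fin N → Vec p)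
    (j : Fin N) : G.gphi w z h lam phi j = z - w j :=
  (hG.2.2.2.2 w z h lam phi j).unique (hasGradientAt_aLag_phi f A pbar κ w z h lam phi j)

section InnerProduct

variable {V : Type*} [NormedAddCommGroup V] [InnerProductSpace ℝ V]

theorem real_inner_le_mul_norm_sq_add {a : ℝ} (ha : 0 < a) (x y : V) :
    ⟪x, y⟫ ≤ a / 2 * ‖x‖ ^ 2 + ‖y‖ ^ 2 / (2 * a) := by
  have hsq : 0 ≤ (a * ‖x‖ - ‖y‖) ^ 2 / (2 * a) := by positivity
  have hexp : (a * ‖x‖ - ‖y‖) ^ 2 / (2 * a)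
      = a / 2 * ‖x‖ ^ 2 + ‖y‖ ^ 2 / (2 * a) - ‖x‖ * ‖y‖ := by
    field_simp
    ring
  linarith [real_inner_le_norm x y]

theorem inner_sub_le_of_variational_ineq (u v v' g g' : V) {a c ρ : ℝ} (ha : 0 < a)
    (hc : 0 ≤ c) (hcρ : c ≤ 1 / ρ)
    (hvi : ⟪(g - c • u) - (1 / ρ) • (v - u), v' - v⟫ ≤ 0) :
    ⟪v' - v, g'⟫ ≤ ‖g' - g‖ ^ 2 / (2 * a) + (a / 2 - c / 2 + 1 / (2 * ρ)) * ‖v' - v‖ ^ 2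
      + c / 2 * (‖v'‖ ^ 2 - ‖v‖ ^ 2) + 1 / (2 * ρ) * ‖v - u‖ ^ 2 := by
  rw [inner_sub_left, inner_sub_left, real_inner_smul_left, real_inner_smul_left] at hvi
  have hg : ⟪v' - v, g'⟫ = ⟪v' - v, g' - g⟫ + ⟪g, v' - v⟫ := by
    rw [inner_sub_right, real_inner_comm g]; ring
  have hu : ⟪u, v' - v⟫ = ⟪v, v' - v⟫ - ⟪v - u, v' - v⟫ := by
    rw [← inner_sub_left, sub_sub_cancel]
  have hv : 2 * ⟪v, v' - v⟫ = ‖v'‖ ^ 2 - ‖v‖ ^ 2 - ‖v' - v‖ ^ 2 := by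
    have := norm_add_sq_real v (v' - v)
    rw [add_sub_cancel] at this
    linarith
  have hyoung := real_inner_le_mul_norm_sq_add ha (v' - v) (g' - g)
  have hcross : (1 / ρ - c) * ⟪v - u, v' - v⟫
      ≤ (1 / ρ - c) * (‖v - u‖ ^ 2 / 2 + ‖v' - v‖ ^ 2 / 2) := by
    refine mul_le_mul_of_nonneg_left ?_ (by linarith)
    linarith [real_inner_le_mul_norm_sq_add one_pos (v - u) (v' - v)]
  rw [show 1 / (2 * ρ) = 1 / ρ / 2 by ring]
  nlinarith [sq_nonneg ‖v - u‖, sq_nonneg ‖v' - v‖]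

end InnerProduct

theorem LipGrad.norm_gphi_sub_sq_le {N m p : ℕ} {L : ℝ} {G : GradOracle N m p}
    (hG : LipGrad L G) (w w' : Fin N → Vec p) (z z' : Vec p) (h h' : ℝ) (lam : Fin m → ℝ)
    (phi : Fin N → Vec p) (j : Fin N) :
    ‖G.gphi w z h lam phi j - G.gphi w' z' h' lam phi j‖ ^ 2
      ≤ L ^ 2 * ((∑ i, ‖w i - w' i‖ ^ 2) + ‖z - z'‖ ^ 2 + ‖h - h'‖ ^ 2) := by
  have hlip := hG w z h lam phi w' z' h' lam phi
  simp only [sub_self, norm_zero, ne_eq, OfNat.ofNat_ne_zero, not_false_eq_true, zero_pow,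
    Finset.sum_const_zero, add_zero] at hlip
  have hj := Finset.single_le_sum (f := fun i => ‖G.gphi w z h lam phi i
    - G.gphi w' z' h' lam phi i‖ ^ 2) (fun i _ => sq_nonneg _) (Finset.mem_univ j)
  have := Finset.sum_nonneg fun i (_ : i ∈ Finset.univ) =>
    sq_nonneg ‖G.gw w z h lam phi i - G.gw w' z' h' lam phi i‖
  have := Finset.sum_nonneg fun l (_ : l ∈ Finset.univ) =>
    sq_nonneg ‖G.glam w z h lam phi l - G.glam w' z' h' lam phi l‖
  nlinarith [sq_nonneg ‖G.gz w z h lam phi - G.gz w' z' h' lam phi‖,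
    sq_nonneg ‖G.gh w z h lam phi - G.gh w' z' h' lam phi‖]

theorem Finset.sum_le_card_mul_add_sum {ι : Type*} [Fintype ι] (Q : Finset ι) {x y : ι → ℝ}
    {K : ℝ} (hQ : ∀ j ∈ Q, x j ≤ K + y j) (hQc : ∀ j ∉ Q, x j ≤ y j) :
    ∑ j, x j ≤ Q.card * K + ∑ j, y j := by
  classical
  calc ∑ j, x j ≤ ∑ j, ((if j ∈ Q then K else 0) + y j) := by
        refine Finset.sum_le_sum fun j _ => ?_
        split_ifs with hj
        · exact hQ j hj
        · simpa using hQc j hj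
    _ = Q.card * K + ∑ j, y j := by
        rw [Finset.sum_add_distrib, Finset.sum_ite_mem, Finset.univ_inter, Finset.sum_const,
          nsmul_eq_mul]

theorem aspire_eq_A39_general
    {N m p : ℕ} (f : Fin N → Vec p → ℝ) (A : Fin m → Fin N → ℝ) (pbar κ L : ℝ)
    (hL : 0 ≤ L)
    (G : GradOracle N m p) (hgrad : IsGradOf f A pbar κ G) (hlip : LipGrad L G)
    (w : ℕ → Fin N → Vec p) (z : ℕ → Vec p) (h : ℕ → ℝ)
    (lam : ℕ → Fin m → ℝ) (phi : ℕ → Fin N → Vec p)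
    (c2 : ℕ → ℝ) (hc2pos : ∀ s, 0 < c2 s) (hc2anti : Antitone c2)
    (ρ2 : ℝ) (hρ2 : 0 < ρ2) (hρ2le : ρ2 ≤ 2 / (L + 2 * c2 0))
    (t : ℕ)
    (Q : Finset (Fin N)) (S' : ℕ) (hS' : Q.card = S')
    (hidlePhi : ∀ j ∉ Q, phi (t + 1) j = phi t j)
    (hineqPhi : ∀ j, ⟪(G.gphi (w t) (z t) (h t) (lam t) (phi (t - 1)) j
        - c2 (t - 1) • phi (t - 1) j) - (1 / ρ2) • (phi t j - phi (t - 1) j),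
        phi (t + 1) j - phi t j⟫ ≤ 0) :
    ∀ a3 : ℝ, 0 < a3 →
      aLag f A pbar κ (w (t + 1)) (z (t + 1)) (h (t + 1)) (lam (t + 1)) (phi (t + 1))
          - aLag f A pbar κ (w (t + 1)) (z (t + 1)) (h (t + 1)) (lam (t + 1)) (phi t)
        ≤ ((S' : ℝ) * L ^ 2 / (2 * a3)) *
            ((∑ j, ‖w (t + 1) j - w t j‖ ^ 2) + ‖z (t + 1) - z t‖ ^ 2 + ‖h (t + 1) - h t‖ ^ 2)
          + (a3 / 2 - (c2 (t - 1) - c2 t) / 2 + 1 / (2 * ρ2)) *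
            (∑ j, ‖phi (t + 1) j - phi t j‖ ^ 2)
          + (c2 (t - 1) / 2) * (∑ j, (‖phi (t + 1) j‖ ^ 2 - ‖phi t j‖ ^ 2))
          + (1 / (2 * ρ2)) * (∑ j, ‖phi t j - phi (t - 1) j‖ ^ 2) := by
  intro a3 ha3
  have hc2ρ2 : c2 (t - 1) ≤ 1 / ρ2 := by
    have hpos : 0 < L + 2 * c2 0 := by linarith [hc2pos 0]
    have := (le_div_iff₀ hpos).1 hρ2le
    rw [le_div_iff₀ hρ2]
    nlinarith [hc2anti (Nat.zero_le (t - 1))]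
  rw [aLag_sub_aLag_phi]
  refine (Finset.sum_le_card_mul_add_sum Q (K := L ^ 2 * ((∑ j, ‖w (t + 1) j - w t j‖ ^ 2)
      + ‖z (t + 1) - z t‖ ^ 2 + ‖h (t + 1) - h t‖ ^ 2) / (2 * a3))
    (y := fun j => (a3 / 2 - (c2 (t - 1) - c2 t) / 2 + 1 / (2 * ρ2))
      * ‖phi (t + 1) j - phi t j‖ ^ 2 + c2 (t - 1) / 2 * (‖phi (t + 1) j‖ ^ 2 - ‖phi t j‖ ^ 2)
      + 1 / (2 * ρ2) * ‖phi t j - phi (t - 1) j‖ ^ 2) ?_ ?_).trans_eq ?_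
  · intro j _
    have hstep := inner_sub_le_of_variational_ineq (phi (t - 1) j) (phi t j) (phi (t + 1) j)
      (z t - w t j) (z (t + 1) - w (t + 1) j) ha3 (hc2pos _).le hc2ρ2
      (by simpa only [hgrad.gphi_eq] using hineqPhi j)
    have hgrad_sub := hlip.norm_gphi_sub_sq_le (w (t + 1)) (w t) (z (t + 1)) (z t) (h (t + 1))
      (h t) (lam (t + 1)) (phi t) j
    rw [hgrad.gphi_eq, hgrad.gphi_eq] at hgrad_sub
    have := div_le_div_of_nonneg_right hgrad_sub (by positivity : (0 : ℝ) ≤ 2 * a3)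
    linarith [mul_nonneg (hc2pos t).le (sq_nonneg ‖phi (t + 1) j - phi t j‖)]
  · intro j hj
    rw [hidlePhi j hj]
    simp only [sub_self, inner_zero_left, norm_zero, ne_eq, OfNat.ofNat_ne_zero,
      not_false_eq_true, zero_pow, mul_zero, zero_add]
    positivity
  · rw [hS']
    simp only [Finset.sum_add_distrib, ← Finset.mul_sum]
    ring

/-- **Eq. (A.39) of ASPIRE-EASE**: control of the asynchronous regularized dual
ascent in `φ`. -/
theorem aspire_eq_A39
    {N m p : ℕ} (f : Fin N → Vec p → ℝ) (A : Fin m → Fin N → ℝ) (pbar κ L : ℝ)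
    (hκ : 0 < κ) (hL : 0 ≤ L)
    (G : GradOracle N m p) (hgrad : IsGradOf f A pbar κ G) (hlip : LipGrad L G)
    (Phiset : Set (Vec p))
    (hPne : Phiset.Nonempty) (hPcl : IsClosed Phiset) (hPco : Convex ℝ Phiset)
    (w : ℕ → Fin N → Vec p) (z : ℕ → Vec p) (h : ℕ → ℝ)
    (lam : ℕ → Fin m → ℝ) (phi : ℕ → Fin N → Vec p)
    (c2 : ℕ → ℝ) (hc2pos : ∀ s, 0 < c2 s) (hc2anti : Antitone c2)
    (ρ2 : ℝ) (hρ2 : 0 < ρ2) (hρ2le : ρ2 ≤ 2 / (L + 2 * c2 0))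
    (t : ℕ) (ht : 1 ≤ t)
    (Q : Finset (Fin N)) (S' : ℕ) (hS' : Q.card = S')
    (hupdPhi : ∀ j ∈ Q, IsProjection Phiset
      (phi t j + ρ2 • (G.gphi (w (t + 1)) (z (t + 1)) (h (t + 1)) (lam (t + 1)) (phi t) j
        - c2 t • phi t j)) (phi (t + 1) j))
    (hidlePhi : ∀ j ∉ Q, phi (t + 1) j = phi t j)
    (hineqPhi : ∀ j, ⟪(G.gphi (w t) (z t) (h t) (lam t) (phi (t - 1)) j
        - c2 (t - 1) • phi (t - 1) j) - (1 / ρ2) • (phi t j - phi (t - 1) j),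
        phi (t + 1) j - phi t j⟫ ≤ 0) :
    ∀ a3 : ℝ, 0 < a3 →
      aLag f A pbar κ (w (t + 1)) (z (t + 1)) (h (t + 1)) (lam (t + 1)) (phi (t + 1))
          - aLag f A pbar κ (w (t + 1)) (z (t + 1)) (h (t + 1)) (lam (t + 1)) (phi t)
        ≤ ((S' : ℝ) * L ^ 2 / (2 * a3)) *
            ((∑ j, ‖w (t + 1) j - w t j‖ ^ 2) + ‖z (t + 1) - z t‖ ^ 2 + ‖h (t + 1) - h t‖ ^ 2)
          + (a3 / 2 - (c2 (t - 1) - c2 t) / 2 + 1 / (2 * ρ2)) *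
            (∑ j, ‖phi (t + 1) j - phi t j‖ ^ 2)
          + (c2 (t - 1) / 2) * (∑ j, (‖phi (t + 1) j‖ ^ 2 - ‖phi t j‖ ^ 2))
          + (1 / (2 * ρ2)) * (∑ j, ‖phi t j - phi (t - 1) j‖ ^ 2) :=
  aspire_eq_A39_general f A pbar κ L hL G hgrad hlip w z h lam phi c2 hc2pos hc2anti ρ2 hρ2 hρ2le t
    Q S' hS' hidlePhi hineqPhi
end
end

section
/- Eq. (A.52) of ASPIRE-EASE (recursion for the auxiliary quantity S₁): Suppose Assumption 1 holds, the sequence (c₁^s)_{s≥0} is positive and nonincreasing, and ρ₁ ≤ 2/(L + 2c₁⁰). Suppose each λ_l^{t+1} is the metric projection onto Λ of λ_l^t + ρ₁·∇_{λ_l}L̃_p(w^{t+1}, z^{t+1}, h^{t+1}, λ^t, φ^t) with parameters (c₁^t, c₂^t), and each λ_l^t is the metric projection onto Λ of λ_l^{t−1} + ρ₁·∇_{λ_l}L̃_p(w^t, z^t, h^t, λ^{t−1}, φ^{t−1}) with parameters (c₁^{t−1}, c₂^{t−1}). Define S₁^{s} = (4/(ρ₁²c₁^{s}))·Σ_{l=1}^m‖λ_l^{s}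 − λ_l^{s−1}‖² − (4/ρ₁)·(c₁^{s−2}/c₁^{s−1} − 1)·Σ_{l=1}^m‖λ_l^{s}‖². Then S₁^{t+1} − S₁^t ≤ Σ_{l=1}^m (4/ρ₁)·(c₁^{t−2}/c₁^{t−1} − c₁^{t−1}/c₁^t)·‖λ_l^t‖² + Σ_{l=1}^m (2/ρ₁ + (4/ρ₁²)·(1/c₁^{t+1} − 1/c₁^t))·‖λ_l^{t+1} − λ_l^t‖² − Σ_{l=1}^m (4/ρ₁)·‖λ_l^t − λ_l^{t−1}‖² + (8mL²/(ρ₁(c₁^t)²))·(Σ_{j=1}^N‖w_j^{t+1} − w_j^t‖² + ‖z^{t+1} − z^t‖² + ‖h^{t+1} − h^t‖²). -/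
open scoped RealInnerProductSpace

noncomputable section

lemma aspire_aux_quad (α β s q : ℝ) (h0 : 0 ≤ α) (hab : α ≤ β) (hb1 : β ≤ 1) :
    0 ≤ (1 + β - α) * s ^ 2 - 2 * (1 - β) * s * q + (1 - α) * q ^ 2 := by
  nlinarith [sq_nonneg ((1 + β - α) * s - (1 - β) * q),
    mul_nonneg (mul_nonneg (by linarith : (0:ℝ) ≤ 1 - β) (by linarith : (0:ℝ) ≤ β - α))
      (sq_nonneg q),
    mul_nonneg (mul_nonneg (by linarith : (0:ℝ) ≤ 1 - α) (by linarith : (0:ℝ) ≤ 2 * β - α))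
      (sq_nonneg q),
    (by linarith : (0:ℝ) < 1 + β - α)]

lemma aspire_aux_T (ρ c c' u v r δ : ℝ) (hρ : 0 < ρ) (hc : 0 < c) (hcc : c ≤ c')
    (hb1 : ρ * c' ≤ 1)
    (P : (u - v) ^ 2 ≤ (u - v) * (ρ * δ + (1 - ρ * c') * (v - r) + ρ * (c' - c) * v)) :
    (1 - ρ * c / 2) * (u - v) ^ 2
      ≤ ρ * (c' - c) * (u ^ 2 - v ^ 2) + (1 - ρ * c) * (v - r) ^ 2 + (2 * ρ / c) * δ ^ 2 := by
  have hQ := aspire_aux_quad (ρ * c) (ρ * c') (u - v) (v - r) (by positivity)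
    (by nlinarith) hb1
  have hsq : 0 ≤ (ρ / (2 * c)) * (c * (u - v) - 2 * δ) ^ 2 := by positivity
  have hexp : (ρ / (2 * c)) * (c * (u - v) - 2 * δ) ^ 2
      = (ρ * c / 2) * (u - v) ^ 2 - 2 * ρ * (u - v) * δ + (2 * ρ / c) * δ ^ 2 := by
    field_simp
    ring
  rw [hexp] at hsq
  nlinarith [P, hQ, hsq]

lemma aspire_glam_formula {N m p : ℕ} (f : Fin N → Vec p → ℝ) (A : Fin m → Fin N → ℝ)
    (pbar κ : ℝ) (G : GradOracle N m p) (hgrad : IsGradOf f A pbar κ G)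
    (w : Fin N → Vec p) (z : Vec p) (h : ℝ) (lam : Fin m → ℝ) (phi : Fin N → Vec p)
    (l : Fin m) :
    G.glam w z h lam phi l = (∑ j, (pbar + A l j) * f j (w j)) - h := by
  have h1 := (hgrad.2.2.2.1 w z h lam phi l).hasDerivAt'
  have h2 : HasDerivAt (fun x => aLag f A pbar κ w z h (Function.update lam l x) phi)
      ((∑ j, (pbar + A l j) * f j (w j)) - h) (lam l) := by
    have heq : (fun x => aLag f A pbar κ w z h (Function.update lam l x) phi)
        = fun x => x * ((∑ j, (pbar + A l j) * f j (w j)) - h) +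
          (h + (∑ l' ∈ Finset.univ.erase l, lam l' * ((∑ j, (pbar + A l' j) * f j (w j)) - h))
            + (∑ j, ⟪phi j, z - w j⟫) + (∑ j, (κ / 2) * ‖z - w j‖ ^ 2)) := by
      funext x
      unfold aLag
      have hcong : ∑ l' ∈ Finset.univ.erase l,
            Function.update lam l x l' * ((∑ j, (pbar + A l' j) * f j (w j)) - h)
          = ∑ l' ∈ Finset.univ.erase l, lam l' * ((∑ j, (pbar + A l' j) * f j (w j)) - h) :=
        Finset.sum_congr rfl (fun l' hl' => by
          rw [Function.update_of_ne (Finset.ne_of_mem_erase hl')])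
      rw [← Finset.add_sum_erase _
        (fun l' => Function.update lam l x l' * ((∑ j, (pbar + A l' j) * f j (w j)) - h))
        (Finset.mem_univ l), Function.update_self, hcong]
      ring
    rw [heq]
    simpa using ((hasDerivAt_id (lam l)).mul_const
      ((∑ j, (pbar + A l j) * f j (w j)) - h)).add_const
        (h + (∑ l' ∈ Finset.univ.erase l, lam l' * ((∑ j, (pbar + A l' j) * f j (w j)) - h))
            + (∑ j, ⟪phi j, z - w j⟫) + (∑ j, (κ / 2) * ‖z - w j‖ ^ 2))
  exact h1.unique h2

set_option maxHeartbeats 1000000 in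
/-- **Eq. (A.52) of ASPIRE-EASE**: recursion for the auxiliary quantity `S₁`. -/
theorem aspire_eq_A52
    {N m p : ℕ} (f : Fin N → Vec p → ℝ) (A : Fin m → Fin N → ℝ) (pbar κ L : ℝ)
    (hκ : 0 < κ) (hL : 0 ≤ L)
    (G : GradOracle N m p) (hgrad : IsGradOf f A pbar κ G) (hlip : LipGrad L G)
    (Lamset : Set ℝ)
    (hLne : Lamset.Nonempty) (hLcl : IsClosed Lamset) (hLco : Convex ℝ Lamset)
    (w : ℕ → Fin N → Vec p) (z : ℕ → Vec p) (h : ℕ → ℝ)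
    (lam : ℕ → Fin m → ℝ) (phi : ℕ → Fin N → Vec p)
    (c1 : ℕ → ℝ) (hc1pos : ∀ s, 0 < c1 s) (hc1anti : Antitone c1)
    (ρ1 : ℝ) (hρ1 : 0 < ρ1) (hρ1le : ρ1 ≤ 2 / (L + 2 * c1 0))
    (t : ℕ) (ht : 2 ≤ t)
    (hupdLam1 : ∀ l, IsProjection Lamset
      (lam t l + ρ1 * (G.glam (w (t + 1)) (z (t + 1)) (h (t + 1)) (lam t) (phi t) l
        - c1 t * lam t l)) (lam (t + 1) l))
    (hupdLam0 : ∀ l, IsProjection Lamset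
      (lam (t - 1) l + ρ1 * (G.glam (w t) (z t) (h t) (lam (t - 1)) (phi (t - 1)) l
        - c1 (t - 1) * lam (t - 1) l)) (lam t l))
    (S1 : ℕ → ℝ)
    (hS1 : ∀ s, S1 s = (4 / (ρ1 ^ 2 * c1 s)) * (∑ l, ‖lam s l - lam (s - 1) l‖ ^ 2)
      - (4 / ρ1) * (c1 (s - 2) / c1 (s - 1) - 1) * (∑ l, ‖lam s l‖ ^ 2)) :
    S1 (t + 1) - S1 t
      ≤ (∑ l, (4 / ρ1) * (c1 (t - 2) / c1 (t - 1) - c1 (t - 1) / c1 t) * ‖lam t l‖ ^ 2)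
        + (∑ l, (2 / ρ1 + (4 / ρ1 ^ 2) * (1 / c1 (t + 1) - 1 / c1 t)) *
            ‖lam (t + 1) l - lam t l‖ ^ 2)
        - (∑ l, (4 / ρ1) * ‖lam t l - lam (t - 1) l‖ ^ 2)
        + (8 * (m : ℝ) * L ^ 2 / (ρ1 * (c1 t) ^ 2)) *
            ((∑ j, ‖w (t + 1) j - w t j‖ ^ 2) + ‖z (t + 1) - z t‖ ^ 2
              + ‖h (t + 1) - h t‖ ^ 2) := by
  -- eliminate the trivial case m = 0
  rcases Nat.eq_zero_or_pos m with hm | hm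
  · subst hm
    rw [hS1, hS1]
    simp
  have hm1 : (1:ℝ) ≤ (m:ℝ) := by exact_mod_cast hm
  -- basic positivity facts
  have hc : 0 < c1 t := hc1pos t
  have hc' : 0 < c1 (t-1) := hc1pos (t-1)
  have hc'' : 0 < c1 (t+1) := hc1pos (t+1)
  have hc0 : 0 < c1 0 := hc1pos 0
  have hcc : c1 t ≤ c1 (t-1) := hc1anti (by omega)
  have hc0t : c1 (t-1) ≤ c1 0 := hc1anti (by omega)
  have hden : 0 < L + 2 * c1 0 := by linarith
  have hρc2 : ρ1 * (L + 2 * c1 0) ≤ 2 := by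
    rw [← le_div_iff₀ hden]; exact hρ1le
  have hb1 : ρ1 * c1 (t-1) ≤ 1 := by nlinarith
  -- the formula for the λ-gradient
  have hform := fun W Z H Lam Phi l =>
    aspire_glam_formula f A pbar κ G hgrad W Z H Lam Phi l
  have hg1 : ∀ l, G.glam (w (t+1)) (z (t+1)) (h (t+1)) (lam t) (phi t) l
      = (∑ j, (pbar + A l j) * f j (w (t+1) j)) - h (t+1) := fun l => hform _ _ _ _ _ l
  have hg0 : ∀ l, G.glam (w t) (z t) (h t) (lam (t-1)) (phi (t-1)) l
      = (∑ j, (pbar + A l j) * f j (w t j)) - h t := fun l => hform _ _ _ _ _ l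
  have hg2 : ∀ l, G.glam (w t) (z t) (h t) (lam t) (phi t) l
      = (∑ j, (pbar + A l j) * f j (w t j)) - h t := fun l => hform _ _ _ _ _ l
  set δ : Fin m → ℝ := fun l =>
    ((∑ j, (pbar + A l j) * f j (w (t+1) j)) - h (t+1))
      - ((∑ j, (pbar + A l j) * f j (w t j)) - h t) with hδ
  have hδl : ∀ l, δ l = ((∑ j, (pbar + A l j) * f j (w (t+1) j)) - h (t+1))
      - ((∑ j, (pbar + A l j) * f j (w t j)) - h t) := fun l => rfl
  set D : ℝ := (∑ j, ‖w (t+1) j - w t j‖^2) + ‖z (t+1) - z t‖^2 + (h (t+1) - h t)^2 with hD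
  have hDnn : 0 ≤ D := add_nonneg (add_nonneg (Finset.sum_nonneg fun j _ => sq_nonneg _)
    (sq_nonneg _)) (sq_nonneg _)
  -- Lipschitz bound on the λ-gradient difference
  have F2 : (∑ l, (δ l)^2) ≤ L^2 * D := by
    have hbig := hlip (w (t+1)) (z (t+1)) (h (t+1)) (lam t) (phi t)
      (w t) (z t) (h t) (lam t) (phi t)
    simp only [sub_self, norm_zero, Finset.sum_const_zero, add_zero, Real.norm_eq_abs, sq_abs,
      ne_eq, OfNat.ofNat_ne_zero, not_false_eq_true, zero_pow] at hbig
    have e1 : (∑ l, (G.glam (w (t+1)) (z (t+1)) (h (t+1)) (lam t) (phi t) l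
        - G.glam (w t) (z t) (h t) (lam t) (phi t) l)^2) = ∑ l, (δ l)^2 := by
      apply Finset.sum_congr rfl; intro l _
      rw [hg1 l, hg2 l, ← hδl l]
    have n1 : 0 ≤ ∑ j, ‖G.gw (w (t+1)) (z (t+1)) (h (t+1)) (lam t) (phi t) j
        - G.gw (w t) (z t) (h t) (lam t) (phi t) j‖^2 :=
      Finset.sum_nonneg fun j _ => sq_nonneg _
    have n2 : 0 ≤ ‖G.gz (w (t+1)) (z (t+1)) (h (t+1)) (lam t) (phi t)
        - G.gz (w t) (z t) (h t) (lam t) (phi t)‖^2 := sq_nonneg _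
    have n3 : 0 ≤ (G.gh (w (t+1)) (z (t+1)) (h (t+1)) (lam t) (phi t)
        - G.gh (w t) (z t) (h t) (lam t) (phi t))^2 := sq_nonneg _
    have n4 : 0 ≤ ∑ j, ‖G.gphi (w (t+1)) (z (t+1)) (h (t+1)) (lam t) (phi t) j
        - G.gphi (w t) (z t) (h t) (lam t) (phi t) j‖^2 :=
      Finset.sum_nonneg fun j _ => sq_nonneg _
    rw [hD, ← e1]
    linarith [hbig]
  -- the two variational inequalities from the projections
  have hmemU : ∀ l, lam (t+1) l ∈ Lamset := fun l => (hupdLam1 l).1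
  have hmemV : ∀ l, lam t l ∈ Lamset := fun l => (hupdLam0 l).1
  have hP : ∀ l, (lam (t+1) l - lam t l)^2
      ≤ (lam (t+1) l - lam t l) * (ρ1 * δ l + (1 - ρ1 * c1 (t-1)) * (lam t l - lam (t-1) l)
        + ρ1 * (c1 (t-1) - c1 t) * (lam t l)) := by
    intro l
    have h1 := (hupdLam1 l).2 (lam t l) (hmemV l)
    have h0 := (hupdLam0 l).2 (lam (t+1) l) (hmemU l)
    simp only [RCLike.inner_apply, starRingEnd_apply, star_trivial] at h1 h0
    rw [hg1 l] at h1
    rw [hg0 l] at h0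
    rw [hδl l]
    nlinarith [h1, h0]
  -- per-coordinate main inequality
  have hT : ∀ l, (1 - ρ1 * c1 t / 2) * (lam (t+1) l - lam t l)^2
      ≤ ρ1 * (c1 (t-1) - c1 t) * ((lam (t+1) l)^2 - (lam t l)^2)
        + (1 - ρ1 * c1 t) * (lam t l - lam (t-1) l)^2 + (2 * ρ1 / c1 t) * (δ l)^2 :=
    fun l => aspire_aux_T ρ1 (c1 t) (c1 (t-1)) (lam (t+1) l) (lam t l) (lam (t-1) l)
      (δ l) hρ1 hc hcc hb1 (hP l)
  -- sum over l
  set A1 : ℝ := ∑ l, (lam (t+1) l - lam t l)^2 with hA1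
  set A0 : ℝ := ∑ l, (lam t l - lam (t-1) l)^2 with hA0
  set SU : ℝ := ∑ l, (lam (t+1) l)^2 with hSU
  set SV : ℝ := ∑ l, (lam t l)^2 with hSV
  have F1 : (1 - ρ1 * c1 t / 2) * A1
      ≤ ρ1 * (c1 (t-1) - c1 t) * (SU - SV) + (1 - ρ1 * c1 t) * A0
        + (2 * ρ1 / c1 t) * (∑ l, (δ l)^2) := by
    have hs := Finset.sum_le_sum (fun l (_ : l ∈ Finset.univ) => hT l)
    rw [← Finset.mul_sum] at hs
    calc (1 - ρ1 * c1 t / 2) * A1 ≤ _ := hs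
    _ = ρ1 * (c1 (t-1) - c1 t) * (SU - SV) + (1 - ρ1 * c1 t) * A0
        + (2 * ρ1 / c1 t) * (∑ l, (δ l)^2) := by
      rw [Finset.sum_add_distrib, Finset.sum_add_distrib, ← Finset.mul_sum, ← Finset.mul_sum,
        ← Finset.mul_sum, Finset.sum_sub_distrib, hA0, hSU, hSV]
  -- combine with the Lipschitz bound
  have key : 0 ≤ ρ1 * (c1 (t-1) - c1 t) * (SU - SV) + (1 - ρ1 * c1 t) * A0
      + (2 * (m:ℝ) * ρ1 * L^2 / c1 t) * D - (1 - ρ1 * c1 t / 2) * A1 := by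
    have h5 : (2 * ρ1 / c1 t) * (∑ l, (δ l)^2) ≤ (2 * ρ1 / c1 t) * (L^2 * D) :=
      mul_le_mul_of_nonneg_left F2 (by positivity)
    have h6 : (2 * ρ1 / c1 t) * (L^2 * D) ≤ (2 * (m:ℝ) * ρ1 * L^2 / c1 t) * D := by
      have h7 : L^2 * D ≤ (m:ℝ) * (L^2 * D) :=
        le_mul_of_one_le_left (by positivity) hm1
      have h8 : (2 * ρ1 / c1 t) * ((m:ℝ) * (L^2 * D)) = (2 * (m:ℝ) * ρ1 * L^2 / c1 t) * D := by
        ring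
      rw [← h8]
      exact mul_le_mul_of_nonneg_left h7 (by positivity)
    linarith [F1, h5, h6]
  -- rewrite the goal
  have et1 : t + 1 - 1 = t := by omega
  have et2 : t + 1 - 2 = t - 1 := by omega
  have hS1a := hS1 (t+1)
  have hS1b := hS1 t
  rw [et1, et2] at hS1a
  rw [hS1a, hS1b]
  simp only [Real.norm_eq_abs, sq_abs]
  rw [← Finset.mul_sum, ← Finset.mul_sum, ← Finset.mul_sum]
  rw [← hA1, ← hA0, ← hSU, ← hSV, ← hD]
  rw [← sub_nonneg]
  have hident : 4 / ρ1 * (c1 (t - 2) / c1 (t - 1) - c1 (t - 1) / c1 t) * SV +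
            (2 / ρ1 + 4 / ρ1 ^ 2 * (1 / c1 (t + 1) - 1 / c1 t)) * A1 -
          4 / ρ1 * A0 +
        8 * (m:ℝ) * L ^ 2 / (ρ1 * c1 t ^ 2) * D -
      (4 / (ρ1 ^ 2 * c1 (t + 1)) * A1 - 4 / ρ1 * (c1 (t - 1) / c1 t - 1) * SU -
        (4 / (ρ1 ^ 2 * c1 t) * A0 - 4 / ρ1 * (c1 (t - 2) / c1 (t - 1) - 1) * SV))
      = (4 / (ρ1 ^ 2 * c1 t)) * (ρ1 * (c1 (t-1) - c1 t) * (SU - SV) + (1 - ρ1 * c1 t) * A0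
        + (2 * (m:ℝ) * ρ1 * L^2 / c1 t) * D - (1 - ρ1 * c1 t / 2) * A1) := by
    field_simp
    ring
  rw [hident]
  exact mul_nonneg (by positivity) key
end
end

section
/- Eqs. (A.87-1)/(A.87-2) of ASPIRE-EASE (bounded-staleness telescoping for squared increments): Let H be a real inner product space, τ ≥ 1 an integer, σ ≥ 0, and u : ℕ → H a sequence with ‖u_t‖ ≤ σ for all t. Let V ⊆ ℕ be a set of active times such that u_{t+1} = u_t whenever t + 1 ∉ V, and such that every interval of τ consecutive positive integers contains an element of V. For t ∈ ℕ let n(t) = min{s ∈ V : s > t}. Then for all natural numbers a ≤ b: Σ_{t=a}^{b} ‖u_{n(t)} − u_t‖² ≤ τ·Σ_{t=a}^{b} ‖u_{t+1} − u_t‖² + 4τ(τ − 1)σ². -/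
/-- **Eqs. (A.87-1)/(A.87-2) of ASPIRE-EASE**: bounded-staleness telescoping for the
squared increments of a sequence `u` in a real inner product space that only changes
at active times `V`, with consecutive active times at most `τ` apart.  Here
`n t = min {s ∈ V | t < s}` is the next active time after `t`. -/
theorem aspire_staleness_telescoping
    {H : Type*} [NormedAddCommGroup H] [InnerProductSpace ℝ H]
    (τ : ℕ) (hτ : 1 ≤ τ) (σ : ℝ) (hσ : 0 ≤ σ)
    (u : ℕ → H) (hu : ∀ t, ‖u t‖ ≤ σ)
    (V : Set ℕ)
    (hconst : ∀ t : ℕ, t + 1 ∉ V → u (t + 1) = u t)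
    (hactive : ∀ t : ℕ, ∃ s ∈ V, t + 1 ≤ s ∧ s ≤ t + τ)
    (n : ℕ → ℕ)
    (hn : ∀ t, n t ∈ V ∧ t < n t ∧ ∀ s ∈ V, t < s → n t ≤ s)
    (a b : ℕ) (hab : a ≤ b) :
    ∑ t ∈ Finset.Icc a b, ‖u (n t) - u t‖ ^ 2
      ≤ (τ : ℝ) * ∑ t ∈ Finset.Icc a b, ‖u (t + 1) - u t‖ ^ 2
        + 4 * (τ : ℝ) * ((τ : ℝ) - 1) * σ ^ 2 := by
  have hnle : ∀ t, n t ≤ t + τ := by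
    intro t
    obtain ⟨s, hsV, hs1, hs2⟩ := hactive t
    exact le_trans ((hn t).2.2 s hsV hs1) hs2
  have hconst' : ∀ t k, t ≤ k → k < n t → u k = u t := by
    intro t k
    induction k with
    | zero => intro h _; rw [Nat.le_zero.mp h]
    | succ j ih =>
      intro h hk
      rcases Nat.eq_or_lt_of_le h with heq | hlt'
      · rw [heq]
      · have hj : t ≤ j := Nat.lt_succ_iff.mp hlt'
        have hnot : j + 1 ∉ V := fun hmem =>
          absurd ((hn t).2.2 _ hmem hlt') (Nat.not_le.mpr hk)
        rw [hconst j hnot, ih hj (Nat.lt_of_succ_lt hk)]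
  have hkey : ∀ t, u (n t - 1) = u t := by
    intro t
    have h1 : t < n t := (hn t).2.1
    exact hconst' t (n t - 1) (by omega) (by omega)
  set g : ℕ → ℝ := fun m => ‖u m - u (m - 1)‖ ^ 2 with hg
  have hg0 : ∀ m, 0 ≤ g m := fun m => sq_nonneg _
  have hgb : ∀ m, g m ≤ 4 * σ ^ 2 := by
    intro m
    have h1 : ‖u m - u (m - 1)‖ ≤ 2 * σ := by
      calc ‖u m - u (m - 1)‖ ≤ ‖u m‖ + ‖u (m - 1)‖ := norm_sub_le _ _
        _ ≤ σ + σ := add_le_add (hu m) (hu (m - 1))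
        _ = 2 * σ := by ring
    calc g m = ‖u m - u (m - 1)‖ ^ 2 := rfl
      _ ≤ (2 * σ) ^ 2 := pow_le_pow_left₀ (norm_nonneg _) h1 2
      _ = 4 * σ ^ 2 := by ring
  have hLHS : ∀ t, ‖u (n t) - u t‖ ^ 2 = g (n t) := by
    intro t
    show _ = ‖u (n t) - u (n t - 1)‖ ^ 2
    rw [hkey t]
  have hcard : ∀ m ∈ (Finset.Icc a b).image n,
      ((Finset.Icc a b).filter (fun t => n t = m)).card ≤ τ := by
    intro m _
    have hsub : (Finset.Icc a b).filter (fun t => n t = m)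
        ⊆ Finset.Icc (m - τ) (m - 1) := by
      intro t ht
      simp only [Finset.mem_filter, Finset.mem_Icc] at ht ⊢
      obtain ⟨⟨_, _⟩, rfl⟩ := ht
      have h1 := (hn t).2.1
      have h2 := hnle t
      omega
    calc _ ≤ (Finset.Icc (m - τ) (m - 1)).card := Finset.card_le_card hsub
      _ ≤ τ := by rw [Nat.card_Icc]; omega
  have himg : (Finset.Icc a b).image n ⊆ Finset.Ioc a (b + τ) := by
    intro m hm
    simp only [Finset.mem_image, Finset.mem_Icc] at hm
    obtain ⟨t, ⟨hta, htb⟩, rfl⟩ := hm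
    simp only [Finset.mem_Ioc]
    have h1 := (hn t).2.1
    have h2 := hnle t
    omega
  have step1 : ∑ t ∈ Finset.Icc a b, g (n t)
      ≤ ∑ m ∈ Finset.Ioc a (b + τ), (τ : ℝ) * g m := by
    rw [Finset.sum_comp]
    refine le_trans (Finset.sum_le_sum (fun m hm => ?_))
      (Finset.sum_le_sum_of_subset_of_nonneg himg
        (fun m _ _ => mul_nonneg (by positivity) (hg0 m)))
    rw [nsmul_eq_mul]
    exact mul_le_mul_of_nonneg_right (by exact_mod_cast hcard m hm) (hg0 m)
  have hsplit : ∑ m ∈ Finset.Ioc a (b + 1), g m + ∑ m ∈ Finset.Ioc (b + 1) (b + τ), g m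
      = ∑ m ∈ Finset.Ioc a (b + τ), g m :=
    Finset.sum_Ioc_consecutive g (by omega) (by omega)
  have hre : ∑ m ∈ Finset.Ioc a (b + 1), g m
      = ∑ t ∈ Finset.Icc a b, ‖u (t + 1) - u t‖ ^ 2 := by
    have himage : Finset.Ioc a (b + 1) = Finset.image (· + 1) (Finset.Icc a b) := by
      ext m
      simp only [Finset.mem_Ioc, Finset.mem_image, Finset.mem_Icc]
      constructor
      · intro ⟨h1, h2⟩; exact ⟨m - 1, by omega, by omega⟩
      · rintro ⟨t, ⟨h1, h2⟩, rfl⟩; omega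
    rw [himage, Finset.sum_image (fun x _ y _ h => by omega)]
    apply Finset.sum_congr rfl
    intro t _
    show ‖u (t + 1) - u (t + 1 - 1)‖ ^ 2 = _
    simp
  have htail : ∑ m ∈ Finset.Ioc (b + 1) (b + τ), g m ≤ ((τ : ℝ) - 1) * (4 * σ ^ 2) := by
    calc ∑ m ∈ Finset.Ioc (b + 1) (b + τ), g m
        ≤ ∑ _m ∈ Finset.Ioc (b + 1) (b + τ), 4 * σ ^ 2 :=
          Finset.sum_le_sum (fun m _ => hgb m)
      _ = ((Finset.Ioc (b + 1) (b + τ)).card : ℝ) * (4 * σ ^ 2) := by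
          rw [Finset.sum_const, nsmul_eq_mul]
      _ = ((τ : ℝ) - 1) * (4 * σ ^ 2) := by
          rw [Nat.card_Ioc, show b + τ - (b + 1) = τ - 1 by omega, Nat.cast_sub hτ]
          push_cast; ring
  calc ∑ t ∈ Finset.Icc a b, ‖u (n t) - u t‖ ^ 2
      = ∑ t ∈ Finset.Icc a b, g (n t) := Finset.sum_congr rfl (fun t _ => hLHS t)
    _ ≤ ∑ m ∈ Finset.Ioc a (b + τ), (τ : ℝ) * g m := step1
    _ = (τ : ℝ) * (∑ m ∈ Finset.Ioc a (b + 1), g m + ∑ m ∈ Finset.Ioc (b + 1) (b + τ), g m) := by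
        rw [hsplit, Finset.mul_sum]
    _ ≤ (τ : ℝ) * (∑ t ∈ Finset.Icc a b, ‖u (t + 1) - u t‖ ^ 2 + ((τ : ℝ) - 1) * (4 * σ ^ 2)) := by
        apply mul_le_mul_of_nonneg_left _ (by positivity)
        rw [hre]
        exact add_le_add_right htail _
    _ = (τ : ℝ) * ∑ t ∈ Finset.Icc a b, ‖u (t + 1) - u t‖ ^ 2
        + 4 * (τ : ℝ) * ((τ : ℝ) - 1) * σ ^ 2 := by ring
end
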